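/- arXiv:math-ph/0110006 — 9 statements merged into one kernel-verified Lean document; each statement's English description precedes it below -/
import Mathlib

section
/- The q-ordering map O_q satisfies O_q(∂p/∂z̄_j) = ad(a_j)(O_q(p)) and O_q(∂p/∂z_j) = -ad(a_j⁺)(O_q(p)) for every polynomial p, where ad(x)(w) = xw - wx. -/
/-!
Both `M_k` and `M_k⁺` have the form `w ↦ α • y w + β • w y` with `α + β = 1`. For such an
operator `T`, `⁅x, T w⁆ - T ⁅x, w⁆ = α • ⁅x, y⁆ w + β • w ⁅x, y⁆`, which is `s • w` when
`⁅x, y⁆ = s • 1`. By the CCR, `ad a_j` therefore commutes with every `M_k` and has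
`[ad a_j, M_k⁺] = δ_jk`, while `[ad a_j⁺, M_k] = -δ_jk` and `ad a_j⁺` commutes with every `M_k⁺`.
A similar computation shows that all the `M_k`, `M_k⁺` commute, so that
`O_q (z_i p) = M_i (O_q p)` and `O_q (z̄_i p) = M_i⁺ (O_q p)`. An induction on `p` that peels off
one variable at a time then turns `[D, T_i] = r δ_ik` into `D ∘ O_q = r • O_q ∘ ∂_k`.
-/

open MvPolynomial

theorem List.prod_ofFn_update_mul {M : Type*} [Monoid M] {n : ℕ} (f : Fin n → M) (j : Fin n)
    (y : M) (hy : ∀ k, Commute y (f k)) :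
    (List.ofFn (Function.update f j (y * f j))).prod = y * (List.ofFn f).prod := by
  have hset : ∀ x, (List.ofFn (Function.update f j x)).prod =
      ((List.ofFn f).take j).prod * x * ((List.ofFn f).drop (j + 1)).prod := by
    intro x
    simp [List.ofFn_eq_map, (List.nodup_finRange n).map_update, List.prod_set]
  have htake : Commute y ((List.ofFn f).take j).prod :=
    Commute.list_prod_right _ _ fun z hz => by
      obtain ⟨k, rfl⟩ := List.mem_ofFn.mp (List.mem_of_mem_take hz)
      exact hy k
  conv_rhs => rw [← Function.update_eq_self j f, hset]
  rw [hset, ← mul_assoc, ← htake.eq, mul_assoc y, mul_assoc y, mul_assoc]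

theorem List.prod_ofFn_pow_single_add {M : Type*} [Monoid M] {n : ℕ} (T : Fin n → M)
    (hT : ∀ j k, Commute (T j) (T k)) (e : Fin n → ℕ) (j : Fin n) :
    (List.ofFn fun k => T k ^ ((Pi.single j 1 : Fin n → ℕ) k + e k)).prod =
      T j * (List.ofFn fun k => T k ^ e k).prod := by
  have hupd : (fun k => T k ^ ((Pi.single j 1 : Fin n → ℕ) k + e k)) =
      Function.update (fun k => T k ^ e k) j (T j * T j ^ e j) := by
    funext k
    rcases eq_or_ne k j with rfl | hk
    · simp [add_comm 1, pow_succ']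
    · simp [hk]
  rw [hupd, List.prod_ofFn_update_mul _ _ _ fun k => (hT j k).pow_right _]

section OrderedMonomial

variable {A : Type*} [Monoid A] {m n : ℕ}

def orderedMonomial (P : Fin m → A) (Q : Fin n → A) (e : Fin m ⊕ Fin n →₀ ℕ) : A :=
  (List.ofFn fun j => P j ^ e (Sum.inl j)).prod * (List.ofFn fun j => Q j ^ e (Sum.inr j)).prod

theorem orderedMonomial_single_add {P : Fin m → A} {Q : Fin n → A}
    (hP : ∀ j k, Commute (P j) (P k)) (hQ : ∀ j k, Commute (Q j) (Q k))
    (hPQ : ∀ j k, Commute (P j) (Q k)) (i : Fin m ⊕ Fin n) (e : Fin m ⊕ Fin n →₀ ℕ) :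
    orderedMonomial P Q (Finsupp.single i 1 + e) = Sum.elim P Q i * orderedMonomial P Q e := by
  unfold orderedMonomial
  rcases i with j | j
  · have hinl : ∀ k, (Finsupp.single (Sum.inl j) 1 + e : Fin m ⊕ Fin n →₀ ℕ) (Sum.inl k) =
        (Pi.single j 1 : Fin m → ℕ) k + e (Sum.inl k) := by
      simp [Finsupp.single_apply, Pi.single_apply, eq_comm]
    have hinr : ∀ k, (Finsupp.single (Sum.inl j) 1 + e : Fin m ⊕ Fin n →₀ ℕ) (Sum.inr k) =
        e (Sum.inr k) := by
      simp
    simp only [hinl, hinr, List.prod_ofFn_pow_single_add P hP, Sum.elim_inl, mul_assoc]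
  · have hinl : ∀ k, (Finsupp.single (Sum.inr j) 1 + e : Fin m ⊕ Fin n →₀ ℕ) (Sum.inl k) =
        e (Sum.inl k) := by
      simp
    have hinr : ∀ k, (Finsupp.single (Sum.inr j) 1 + e : Fin m ⊕ Fin n →₀ ℕ) (Sum.inr k) =
        (Pi.single j 1 : Fin n → ℕ) k + e (Sum.inr k) := by
      simp [Finsupp.single_apply, Pi.single_apply, eq_comm]
    have hcomm : Commute (Q j) (List.ofFn fun k => P k ^ e (Sum.inl k)).prod :=
      Commute.list_prod_right _ _ fun z hz => by
        obtain ⟨k, rfl⟩ := List.mem_ofFn.mp hz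
        exact (hPQ k j).symm.pow_right _
    simp only [hinl, hinr, List.prod_ofFn_pow_single_add Q hQ, Sum.elim_inr, ← mul_assoc,
      hcomm.eq]

end OrderedMonomial

section LeftRightMultiplication

variable {R A : Type*} [CommRing R] [Ring A] [Algebra R A]

theorem lie_apply_eq_of_lie_eq_algebraMap {T : Module.End R A} {y : A} {α β : R}
    (hT : ∀ w, T w = α • (y * w) + β • (w * y)) {x : A} {s : R}
    (hxy : ⁅x, y⁆ = algebraMap R A s) (w : A) :
    ⁅x, T w⁆ = T ⁅x, w⁆ + ((α + β) * s) • w := by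
  have key : ⁅x, T w⁆ - T ⁅x, w⁆ = α • (⁅x, y⁆ * w) + β • (w * ⁅x, y⁆) := by
    simp only [hT, Ring.lie_def, mul_add, add_mul, mul_sub, sub_mul, mul_smul_comm,
      smul_mul_assoc, mul_assoc]
    module
  rw [hxy, ← Algebra.commutes, ← Algebra.smul_def, smul_smul, smul_smul,
    ← add_smul, ← add_mul] at key
  exact sub_eq_iff_eq_add'.mp key

theorem Module.End.commute_of_lie_eq_algebraMap {S T : Module.End R A} {x y : A}
    {α β γ δ : R} (hS : ∀ w, S w = α • (x * w) + β • (w * x))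
    (hT : ∀ w, T w = γ • (y * w) + δ • (w * y)) {s : R} (hxy : ⁅x, y⁆ = algebraMap R A s)
    (hs : α * γ * s = β * δ * s) : Commute S T := by
  refine LinearMap.ext fun w => sub_eq_zero.mp ?_
  have key : S (T w) - T (S w) = (α * γ) • (⁅x, y⁆ * w) - (β * δ) • (w * ⁅x, y⁆) := by
    simp only [hS, hT, Ring.lie_def, mul_add, add_mul, mul_sub, sub_mul, smul_add, smul_sub,
      mul_smul_comm, smul_mul_assoc, smul_smul, mul_assoc]
    module
  rw [hxy, ← Algebra.commutes, ← Algebra.smul_def, smul_smul, smul_smul, hs, sub_self] at key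
  exact key

end LeftRightMultiplication

section OrderingMap

variable {σ R V : Type*} [CommSemiring R] [AddCommMonoid V] [Module R V]

theorem map_X_mul_of_map_monomial (O : MvPolynomial σ R →ₗ[R] V) {T : σ → Module.End R V}
    {F : (σ →₀ ℕ) → Module.End R V} {v : V}
    (hF : ∀ i e, F (Finsupp.single i 1 + e) = T i * F e)
    (hO : ∀ e, O (monomial e 1) = F e v) (i : σ) (p : MvPolynomial σ R) :
    O (X i * p) = T i (O p) := by
  induction p using MvPolynomial.induction_on' with
  | monomial e c =>
    have hc : ∀ e' : σ →₀ ℕ, monomial e' c = c • monomial e' (1 : R) := fun e' => by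
      rw [smul_monomial, smul_eq_mul, mul_one]
    rw [hc, mul_smul_comm, ← pow_one (X i), ← monomial_single_add, map_smul, map_smul, hO, hO,
      hF, Module.End.mul_apply, map_smul]
  | add p r hp hr => rw [mul_add, map_add, map_add, map_add, hp, hr]

theorem apply_map_eq_smul_map_pderiv [DecidableEq σ] (O : MvPolynomial σ R →ₗ[R] V)
    {T : σ → Module.End R V} {D : Module.End R V} (hX : ∀ i p, O (X i * p) = T i (O p))
    (hD1 : D (O 1) = 0) (k : σ) (r : R)
    (hDT : ∀ i w, D (T i w) = T i (D w) + (Pi.single k r : σ → R) i • w)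
    (p : MvPolynomial σ R) : D (O p) = r • O (pderiv k p) := by
  induction p using MvPolynomial.induction_on with
  | C c => rw [pderiv_C, C_eq_smul_one, map_smul, map_smul, hD1, smul_zero, map_zero, smul_zero]
  | add p q hp hq => rw [map_add, map_add, hp, hq, map_add, map_add, smul_add]
  | mul_X p i hp =>
    rw [mul_comm, hX, hDT, hp, (pderiv k).leibniz, pderiv_X]
    rcases eq_or_ne i k with rfl | hik
    · simp [hX]
    · simp [hX, hik]

theorem lie_map_eq_smul_map_pderiv [DecidableEq σ] {A : Type*} [Ring A] [Algebra R A]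
    (O : MvPolynomial σ R →ₗ[R] A) {T : σ → Module.End R A}
    (hX : ∀ i p, O (X i * p) = T i (O p)) (hO1 : O 1 = 1) {x : A} (k : σ) (r : R)
    (hxT : ∀ i w, ⁅x, T i w⁆ = T i ⁅x, w⁆ + (Pi.single k r : σ → R) i • w)
    (p : MvPolynomial σ R) : ⁅x, O p⁆ = r • O (pderiv k p) := by
  have ad_apply : ∀ w, (LinearMap.mulLeft R x - LinearMap.mulRight R x) w = ⁅x, w⁆ :=
    fun w => by simp [Ring.lie_def]
  rw [← ad_apply]
  refine apply_map_eq_smul_map_pderiv O hX (by simp [hO1]) k r (fun i w => ?_) p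
  rw [ad_apply, ad_apply, hxT]

end OrderingMap

theorem stmt3_general {W : Type*} [Ring W] [Algebra ℂ W] (d : ℕ) (a ap : Fin d → W)
    (hccr : ∀ j k, a j * ap k - ap k * a j = if j = k then 1 else 0)
    (haa : ∀ j k, a j * a k = a k * a j)
    (hpp : ∀ j k, ap j * ap k = ap k * ap j)
    (q : ℝ)
    (M Mp : Fin d → Module.End ℂ W)
    (hM : ∀ j w, M j w = ((1 - q : ℝ) : ℂ) • (a j * w) + (q : ℂ) • (w * a j))
    (hMp : ∀ j w, Mp j w = (q : ℂ) • (ap j * w) + ((1 - q : ℝ) : ℂ) • (w * ap j))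
    (O : MvPolynomial (Fin d ⊕ Fin d) ℂ →ₗ[ℂ] W)
    (hO : ∀ m : (Fin d ⊕ Fin d) →₀ ℕ,
      O (monomial m 1) =
        ((List.ofFn fun j : Fin d => M j ^ m (Sum.inl j)).prod *
          (List.ofFn fun j : Fin d => Mp j ^ m (Sum.inr j)).prod) 1) :
    ∀ (p : MvPolynomial (Fin d ⊕ Fin d) ℂ) (j : Fin d),
      O (pderiv (Sum.inr j) p) = a j * O p - O p * a j ∧
      O (pderiv (Sum.inl j) p) = -(ap j * O p - O p * ap j) := by
  have lie_a_a : ∀ j k, ⁅a j, a k⁆ = algebraMap ℂ W 0 := by simp [Ring.lie_def, haa]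
  have lie_ap_ap : ∀ j k, ⁅ap j, ap k⁆ = algebraMap ℂ W 0 := by simp [Ring.lie_def, hpp]
  have lie_a_ap : ∀ j k, ⁅a j, ap k⁆ = algebraMap ℂ W (if j = k then 1 else 0) := fun j k => by
    rw [Ring.lie_def, hccr]; split_ifs <;> simp
  have lie_ap_a : ∀ j k, ⁅ap j, a k⁆ = algebraMap ℂ W (-if k = j then 1 else 0) := fun j k => by
    rw [Ring.lie_def, ← neg_sub, hccr, map_neg]; split_ifs <;> simp
  have hX := map_X_mul_of_map_monomial O (F := orderedMonomial M Mp)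
    (orderedMonomial_single_add
      (fun j k => Module.End.commute_of_lie_eq_algebraMap (hM j) (hM k) (lie_a_a j k) (by simp))
      (fun j k => Module.End.commute_of_lie_eq_algebraMap (hMp j) (hMp k) (lie_ap_ap j k)
        (by simp))
      (fun j k => Module.End.commute_of_lie_eq_algebraMap (hM j) (hMp k) (lie_a_ap j k)
        (by ring)))
    hO
  have hO1 : O 1 = 1 := by simpa [orderedMonomial] using hO 0
  refine fun p j => ⟨?_, ?_⟩
  · rw [← Ring.lie_def, lie_map_eq_smul_map_pderiv O hX hO1 (Sum.inr j) 1 ?_ p, one_smul]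
    rintro (k | k) w
    · simp [lie_apply_eq_of_lie_eq_algebraMap (hM k) (lie_a_a j k)]
    · rcases eq_or_ne j k with rfl | hjk
      · simp [lie_apply_eq_of_lie_eq_algebraMap (hMp j) (lie_a_ap j j)]
      · simp [lie_apply_eq_of_lie_eq_algebraMap (hMp k) (lie_a_ap j k), hjk, hjk.symm]
  · rw [← Ring.lie_def, lie_map_eq_smul_map_pderiv O hX hO1 (Sum.inl j) (-1) ?_ p, neg_one_smul,
      neg_neg]
    rintro (k | k) w
    · rcases eq_or_ne j k with rfl | hjk
      · simp [lie_apply_eq_of_lie_eq_algebraMap (hM j) (lie_ap_a j j)]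
      · simp [lie_apply_eq_of_lie_eq_algebraMap (hM k) (lie_ap_a j k), hjk.symm]
    · simp [lie_apply_eq_of_lie_eq_algebraMap (hMp k) (lie_ap_ap j k)]

/-- The `q`-ordering map `O_q : ℂ[z, z̄] → W`, defined on monomials by
`O_q(z^α z̄^β) = M^α M^{+β}(I)` (where `M_j = (1-q)L_{a_j} + q R_{a_j}` and
`M_j⁺ = q L_{a_j⁺} + (1-q) R_{a_j⁺}`), satisfies
`O_q(∂p/∂z̄_j) = ad(a_j)(O_q p)` and `O_q(∂p/∂z_j) = -ad(a_j⁺)(O_q p)` for every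
polynomial `p`.  Here `z`-variables are indexed by `Sum.inl` and `z̄`-variables by
`Sum.inr`, and `ad(x)(w) = xw - wx`. -/
theorem stmt3 {W : Type*} [Ring W] [Algebra ℂ W] (d : ℕ) (a ap : Fin d → W)
    (hccr : ∀ j k, a j * ap k - ap k * a j = if j = k then 1 else 0)
    (haa : ∀ j k, a j * a k = a k * a j)
    (hpp : ∀ j k, ap j * ap k = ap k * ap j)
    (q : ℝ) (hq : q ∈ Set.Icc (0 : ℝ) 1)
    (M Mp : Fin d → Module.End ℂ W)
    (hM : ∀ j w, M j w = ((1 - q : ℝ) : ℂ) • (a j * w) + (q : ℂ) • (w * a j))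
    (hMp : ∀ j w, Mp j w = (q : ℂ) • (ap j * w) + ((1 - q : ℝ) : ℂ) • (w * ap j))
    (O : MvPolynomial (Fin d ⊕ Fin d) ℂ →ₗ[ℂ] W)
    (hO : ∀ m : (Fin d ⊕ Fin d) →₀ ℕ,
      O (monomial m 1) =
        ((List.ofFn fun j : Fin d => M j ^ m (Sum.inl j)).prod *
          (List.ofFn fun j : Fin d => Mp j ^ m (Sum.inr j)).prod) 1) :
    ∀ (p : MvPolynomial (Fin d ⊕ Fin d) ℂ) (j : Fin d),
      O (pderiv (Sum.inr j) p) = a j * O p - O p * a j ∧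
      O (pderiv (Sum.inl j) p) = -(ap j * O p - O p * ap j) :=
  stmt3_general d a ap hccr haa hpp q M Mp hM hMp O hO
end

section
/- For nonnegative integers j, k and a single CCR pair (a, a⁺), the element M^k (M⁺)^j (I) of the Weyl algebra equals B^j_k(a, a⁺) = Σ_{s=0}^{k} (k choose s) q^{k-s} (1-q)^s a^s (a⁺)^j a^{k-s}. -/
/-! Left and right multiplication by `a` commute, so `M ^ k` expands by the binomial theorem,
and `M⁺` multiplies each power of `a⁺` by `q + (1 - q) = 1` on the way from `1` to `a⁺ ^ j`. -/

namespace LinearMap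

variable {R A : Type*} [CommSemiring R] [Semiring A] [Algebra R A]

theorem smul_mulLeft_add_smul_mulRight_pow_apply_one (p r : R) (x : A) (n : ℕ) :
    ((p • mulLeft R x + r • mulRight R x) ^ n) 1 = (p + r) ^ n • x ^ n := by
  induction n with
  | zero => simp
  | succ n ih =>
    rw [pow_succ', Module.End.mul_apply, ih, map_smul, add_apply, smul_apply, smul_apply, mulLeft_apply, mulRight_apply, ← pow_succ',
      ← pow_succ, ← add_smul, smul_smul, ← pow_succ]

theorem smul_mulLeft_add_smul_mulRight_pow_apply (p r : R) (x w : A) (n : ℕ) :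
    ((p • mulLeft R x + r • mulRight R x) ^ n) w =
      ∑ s ∈ Finset.range (n + 1),
        ((n.choose s : R) * p ^ s * r ^ (n - s)) • (x ^ s * w * x ^ (n - s)) := by
  have hcomm : Commute (p • mulLeft R x) (r • mulRight R x) :=
    ((commute_mulLeft_right x x).smul_left p).smul_right r
  rw [hcomm.add_pow, sum_apply]
  refine Finset.sum_congr rfl fun s _ => ?_
  simp only [smul_pow, pow_mulLeft, pow_mulRight, Module.End.mul_apply,
    Module.End.natCast_apply, smul_apply, mulLeft_apply, mulRight_apply,
    ← Nat.cast_smul_eq_nsmul R, Algebra.mul_smul_comm, Algebra.smul_mul_assoc, smul_smul,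
    mul_assoc]
  congr 1
  ring

end LinearMap

theorem stmt5_general {W : Type*} [Ring W] [Algebra ℂ W] (a ap : W)
    (q : ℝ)
    (M Mp : Module.End ℂ W)
    (hM : ∀ w, M w = ((1 - q : ℝ) : ℂ) • (a * w) + (q : ℂ) • (w * a))
    (hMp : ∀ w, Mp w = (q : ℂ) • (ap * w) + ((1 - q : ℝ) : ℂ) • (w * ap)) :
    ∀ j k : ℕ,
      (M ^ k * Mp ^ j) 1 =
        ∑ s ∈ Finset.range (k + 1),
          ((k.choose s : ℂ) * (q : ℂ) ^ (k - s) * ((1 - q : ℝ) : ℂ) ^ s) •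
            (a ^ s * ap ^ j * a ^ (k - s)) := by
  intro j k
  have hM' : M = ((1 - q : ℝ) : ℂ) • LinearMap.mulLeft ℂ a + (q : ℂ) • LinearMap.mulRight ℂ a :=
    LinearMap.ext hM
  have hMp' : Mp = (q : ℂ) • LinearMap.mulLeft ℂ ap + ((1 - q : ℝ) : ℂ) • LinearMap.mulRight ℂ ap :=
    LinearMap.ext hMp
  have hweights : (q : ℂ) + ((1 - q : ℝ) : ℂ) = 1 := by push_cast; ring
  rw [Module.End.mul_apply, hMp', LinearMap.smul_mulLeft_add_smul_mulRight_pow_apply_one, hweights,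
    one_pow, one_smul, hM', LinearMap.smul_mulLeft_add_smul_mulRight_pow_apply]
  simp only [mul_right_comm _ (((1 - q : ℝ) : ℂ) ^ _)]

/-- For nonnegative integers `j, k` and a single CCR pair `(a, a⁺)`, the
element `M^k (M⁺)^j (I)` of the Weyl algebra equals
`B^j_k(a, a⁺) = Σ_{s=0}^{k} (k choose s) q^{k-s} (1-q)^s a^s (a⁺)^j a^{k-s}`,
where `M = (1-q)L_a + q R_a` and `M⁺ = q L_{a⁺} + (1-q) R_{a⁺}`. -/
theorem stmt5 {W : Type*} [Ring W] [Algebra ℂ W] (a ap : W)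
    (hccr : a * ap - ap * a = 1)
    (q : ℝ) (hq : q ∈ Set.Icc (0 : ℝ) 1)
    (M Mp : Module.End ℂ W)
    (hM : ∀ w, M w = ((1 - q : ℝ) : ℂ) • (a * w) + (q : ℂ) • (w * a))
    (hMp : ∀ w, Mp w = (q : ℂ) • (ap * w) + ((1 - q : ℝ) : ℂ) • (w * ap)) :
    ∀ j k : ℕ,
      (M ^ k * Mp ^ j) 1 =
        ∑ s ∈ Finset.range (k + 1),
          ((k.choose s : ℂ) * (q : ℂ) ^ (k - s) * ((1 - q : ℝ) : ℂ) ^ s) •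
            (a ^ s * ap ^ j * a ^ (k - s)) :=
  stmt5_general a ap q M Mp hM hMp
end

section
/- The endomorphisms R_q, L_q, E_q of the Weyl algebra W_{2d}, defined by R_q w = (1-q)² Σ_j a_j w a_j⁺ + q(1-q) Σ_j (w a_j⁺ a_j + a_j a_j⁺ w) + q² Σ_j a_j⁺ w a_j, L_q w = -Σ_j [a_j, [a_j⁺, w]], and E_q w = -Σ_j {(1-q)(a_j[a_j⁺,w] - [a_j,w]a_j⁺) + q([a_j⁺,w]a_j - a_j⁺[a_j,w])} + d·w, satisfy the sl₂ commutation relations [R_q, L_q] = -E_q, [E_q, R_q] = 2R_q, [E_q, L_q] = -2L_q. -/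
/-!
In `Module.End ℂ W` let `λ x`, `ρ x` be left and right multiplication by `x`, `ad x = λ x - ρ x`,
`A_j = (1-q) λ a_j + q ρ a_j` and `A_j⁺ = q λ a_j⁺ + (1-q) ρ a_j⁺`. Brackets of such combinations
only involve `λ` and `ρ` of `[a_j, a_k⁺]`, which is a scalar, so the pairs `(A_j, ad a_j⁺)` and
`(ad a_j, A_j⁺)` satisfy the canonical commutation relations of `2d` independent modes. In terms of
them `R_q = Σ A_j A_j⁺`, `L_q = -Σ ad a_j ad a_j⁺` and `E_q = Σ (ad a_j A_j⁺ - A_j ad a_j⁺)`: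
Schwinger's two-mode realization of `sl₂`. All three brackets then follow from the `gl` relations
`[p_i q_k, p_l q_m] = δ_im p_l q_k - δ_kl p_i q_m` between quadratic monomials in CCR generators.
-/

open Finset

section

-- Scoped to this section: for an algebra `W` it would make `Module K W`, hence `Module.End K W`,
-- resolve through `LieAlgebra.toModule`, and rewriting in `Module.End ℂ W` would stop matching.
attribute [local instance] LieRing.ofAssociativeRing

namespace Ring

variable {A : Type*} [Ring A]

theorem lie_mul (x y z : A) : ⁅x, y * z⁆ = ⁅x, y⁆ * z + y * ⁅x, z⁆ := by
  simp only [lie_def]; noncomm_ring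

theorem mul_lie (x y z : A) : ⁅x * y, z⁆ = x * ⁅y, z⁆ + ⁅x, z⁆ * y := by
  simp only [lie_def]; noncomm_ring

end Ring

structure IsCCR {A ι : Type*} [Ring A] [DecidableEq ι] (p q : ι → A) : Prop where
  lie_p_q : ∀ i k, ⁅p i, q k⁆ = if i = k then 1 else 0
  lie_p_p : ∀ i k, ⁅p i, p k⁆ = 0
  lie_q_q : ∀ i k, ⁅q i, q k⁆ = 0

namespace IsCCR

variable {A ι : Type*} [Ring A] [DecidableEq ι] {p q : ι → A}

theorem lie_q_p (h : IsCCR p q) (i k : ι) : ⁅q i, p k⁆ = -if k = i then 1 else 0 := by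
  rw [← lie_skew, h.lie_p_q]

theorem mul_eq (h : IsCCR p q) (i : ι) : p i * q i = q i * p i + 1 := by
  rw [← sub_eq_iff_eq_add', ← Ring.lie_def, h.lie_p_q, if_pos rfl]

theorem lie_mul_mul (h : IsCCR p q) (i k l m : ι) :
    ⁅p i * q k, p l * q m⁆ =
      (if i = m then p l * q k else 0) - if k = l then p i * q m else 0 := by
  rw [Ring.mul_lie, Ring.lie_mul, Ring.lie_mul, h.lie_q_p, h.lie_q_q, h.lie_p_p, h.lie_p_q]
  split_ifs <;> subst_vars <;> simp_all [sub_eq_neg_add]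

end IsCCR

namespace Schwinger

variable {A κ : Type*} [Ring A] [Fintype κ] (p q : κ ⊕ κ → A)

def raising : A := ∑ j, p (.inl j) * q (.inr j)

def lowering : A := -∑ j, p (.inr j) * q (.inl j)

def weight : A := ∑ j, (p (.inr j) * q (.inr j) - p (.inl j) * q (.inl j))

variable [DecidableEq κ] {p q}

theorem lie_raising_lowering (hpq : IsCCR p q) :
    ⁅raising p q, lowering p q⁆ = -weight p q := by
  simp [raising, lowering, weight, sum_lie_sum, hpq.lie_mul_mul, sum_sub_distrib]

theorem lie_weight_raising (hpq : IsCCR p q) :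
    ⁅weight p q, raising p q⁆ = 2 • raising p q := by
  simp [raising, weight, sum_lie_sum, sub_lie, hpq.lie_mul_mul, sum_sub_distrib, two_mul]

theorem lie_weight_lowering (hpq : IsCCR p q) :
    ⁅weight p q, lowering p q⁆ = -(2 • lowering p q) := by
  simp [lowering, weight, sum_lie_sum, sub_lie, hpq.lie_mul_mul, sum_sub_distrib, two_mul]

theorem weight_eq_sum_add_card (hpq : IsCCR p q) :
    weight p q = ∑ j, (q (.inr j) * p (.inr j) - p (.inl j) * q (.inl j)) + Fintype.card κ := by
  simp [weight, hpq.mul_eq, add_sub_right_comm, sum_add_distrib]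

end Schwinger

end

section Operators

variable {K W : Type*} [CommRing K] [Ring W] [Algebra K W]

def twoSidedMul (s t : K) (x : W) : Module.End K W :=
  s • LinearMap.mulLeft K x + t • LinearMap.mulRight K x

@[simp]
theorem twoSidedMul_apply (s t : K) (x w : W) :
    twoSidedMul s t x w = s • (x * w) + t • (w * x) :=
  rfl

theorem lie_twoSidedMul (s t s' t' : K) (x y : W) :
    ⁅twoSidedMul s t x, twoSidedMul s' t' y⁆ =
      (s * s') • LinearMap.mulLeft K ⁅x, y⁆ - (t * t') • LinearMap.mulRight K ⁅x, y⁆ := by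
  ext w
  simp only [Ring.lie_def, LinearMap.sub_apply, Module.End.mul_apply, twoSidedMul_apply,
    LinearMap.smul_apply, LinearMap.mulLeft_apply, LinearMap.mulRight_apply, mul_add, add_mul,
    mul_sub, sub_mul, smul_add, smul_sub, mul_smul_comm, smul_mul_assoc, smul_smul, mul_assoc]
  module

variable {ι : Type*}

-- Mode `inl j` is `(A_j, ad a_j⁺)` and mode `inr j` is `(ad a_j, A_j⁺)`; `ad = twoSidedMul 1 (-1)`.
def weylP (v : K) (a : ι → W) : ι ⊕ ι → Module.End K W :=
  Sum.elim (fun j ↦ twoSidedMul (1 - v) v (a j)) fun j ↦ twoSidedMul 1 (-1) (a j)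

def weylQ (v : K) (a' : ι → W) : ι ⊕ ι → Module.End K W :=
  Sum.elim (fun j ↦ twoSidedMul 1 (-1) (a' j)) fun j ↦ twoSidedMul v (1 - v) (a' j)

theorem IsCCR.weyl [DecidableEq ι] {a a' : ι → W} (h : IsCCR a a') (v : K) :
    IsCCR (weylP v a) (weylQ v a') where
  lie_p_q := by
    rintro (j | j) (k | k) <;>
      simp only [weylP, weylQ, Sum.elim_inl, Sum.elim_inr, lie_twoSidedMul, h.lie_p_q,
        Sum.inl.injEq, Sum.inr.injEq, reduceCtorEq, if_false] <;>
      split_ifs <;> simp <;> module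
  lie_p_p := by
    rintro (j | j) (k | k) <;> simp [weylP, lie_twoSidedMul, h.lie_p_p]
  lie_q_q := by
    rintro (j | j) (k | k) <;> simp [weylQ, lie_twoSidedMul, h.lie_q_q]

namespace Schwinger

variable [Fintype ι] (v : K) (a a' : ι → W) (w : W)

theorem raising_weyl_apply :
    raising (weylP v a) (weylQ v a') w =
      (1 - v) ^ 2 • ∑ j, a j * w * a' j +
        (v * (1 - v)) • ∑ j, (w * a' j * a j + a j * a' j * w) + v ^ 2 • ∑ j, a' j * w * a j := by
  simp only [raising, LinearMap.sum_apply, Module.End.mul_apply, weylP, weylQ, Sum.elim_inl,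
    Sum.elim_inr, twoSidedMul_apply, smul_sum, ← sum_add_distrib]
  refine sum_congr rfl fun j _ ↦ ?_
  simp only [mul_add, add_mul, smul_add, mul_smul_comm, smul_mul_assoc, mul_assoc]
  module

theorem lowering_weyl_apply :
    lowering (weylP v a) (weylQ v a') w =
      -∑ j, (a j * (a' j * w - w * a' j) - (a' j * w - w * a' j) * a j) := by
  simp only [lowering, LinearMap.neg_apply, LinearMap.sum_apply, Module.End.mul_apply, weylP,
    weylQ, Sum.elim_inl, Sum.elim_inr, twoSidedMul_apply]
  congr 1
  refine sum_congr rfl fun j _ ↦ ?_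
  simp only [mul_add, add_mul, mul_sub, sub_mul, smul_add, mul_smul_comm, smul_mul_assoc, mul_assoc]
  module

theorem weight_weyl_apply [DecidableEq ι] (h : IsCCR a a') :
    weight (weylP v a) (weylQ v a') w =
      -∑ j, ((1 - v) • (a j * (a' j * w - w * a' j) - (a j * w - w * a j) * a' j) +
          v • ((a' j * w - w * a' j) * a j - a' j * (a j * w - w * a j))) +
        (Fintype.card ι : K) • w := by
  rw [weight_eq_sum_add_card (h.weyl v)]
  simp only [LinearMap.add_apply, LinearMap.sum_apply, LinearMap.sub_apply,
    Module.End.mul_apply, weylP, weylQ, Sum.elim_inl, Sum.elim_inr, twoSidedMul_apply,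
    Module.End.natCast_apply, Nat.cast_smul_eq_nsmul]
  congr 1
  rw [← sum_neg_distrib]
  refine sum_congr rfl fun j _ ↦ ?_
  simp only [mul_add, add_mul, mul_sub, sub_mul, smul_add, mul_smul_comm, smul_mul_assoc, mul_assoc]
  module

end Schwinger

end Operators

theorem stmt6_general {W : Type*} [Ring W] [Algebra ℂ W] (d : ℕ) (a ap : Fin d → W)
    (hccr : ∀ j k, a j * ap k - ap k * a j = if j = k then 1 else 0)
    (haa : ∀ j k, a j * a k = a k * a j)
    (hpp : ∀ j k, ap j * ap k = ap k * ap j)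
    (q : ℝ)
    (Rq Lq Eq : Module.End ℂ W)
    (hRq : ∀ w, Rq w =
      ((1 - q : ℝ) : ℂ) ^ 2 • ∑ j, a j * w * ap j +
      ((q : ℂ) * ((1 - q : ℝ) : ℂ)) • ∑ j, (w * ap j * a j + a j * ap j * w) +
      (q : ℂ) ^ 2 • ∑ j, ap j * w * a j)
    (hLq : ∀ w, Lq w = -∑ j, (a j * (ap j * w - w * ap j) - (ap j * w - w * ap j) * a j))
    (hEq : ∀ w, Eq w =
      -∑ j, (((1 - q : ℝ) : ℂ) • (a j * (ap j * w - w * ap j) - (a j * w - w * a j) * ap j) +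
             (q : ℂ) • ((ap j * w - w * ap j) * a j - ap j * (a j * w - w * a j))) +
      (d : ℂ) • w) :
    Rq * Lq - Lq * Rq = -Eq ∧
    Eq * Rq - Rq * Eq = (2 : ℂ) • Rq ∧
    Eq * Lq - Lq * Eq = -((2 : ℂ) • Lq) := by
  have hW : IsCCR a ap :=
    ⟨hccr, fun j k ↦ sub_eq_zero.2 (haa j k), fun j k ↦ sub_eq_zero.2 (hpp j k)⟩
  have hR : Rq = Schwinger.raising (weylP (q : ℂ) a) (weylQ (q : ℂ) ap) := by
    ext w
    rw [hRq, Schwinger.raising_weyl_apply]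
    push_cast
    rfl
  have hL : Lq = Schwinger.lowering (weylP (q : ℂ) a) (weylQ (q : ℂ) ap) := by
    ext w
    rw [hLq, Schwinger.lowering_weyl_apply]
  have hE : Eq = Schwinger.weight (weylP (q : ℂ) a) (weylQ (q : ℂ) ap) := by
    ext w
    rw [hEq, Schwinger.weight_weyl_apply _ _ _ _ hW, Fintype.card_fin]
    push_cast
    rfl
  rw [hR, hL, hE]
  refine ⟨Schwinger.lie_raising_lowering (hW.weyl _), ?_, ?_⟩
  · rw [← Ring.lie_def, Schwinger.lie_weight_raising (hW.weyl _), two_nsmul, two_smul]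
  · rw [← Ring.lie_def, Schwinger.lie_weight_lowering (hW.weyl _), two_nsmul, two_smul]

/-- The endomorphisms `R_q, L_q, E_q` of the Weyl algebra `W_{2d}`, given by
`R_q w = (1-q)² Σ_j a_j w a_j⁺ + q(1-q) Σ_j (w a_j⁺ a_j + a_j a_j⁺ w) + q² Σ_j a_j⁺ w a_j`,
`L_q w = -Σ_j [a_j, [a_j⁺, w]]`, and
`E_q w = -Σ_j {(1-q)(a_j[a_j⁺,w] - [a_j,w]a_j⁺) + q([a_j⁺,w]a_j - a_j⁺[a_j,w])} + d·w`,
satisfy the `sl₂` commutation relations `[R_q, L_q] = -E_q`, `[E_q, R_q] = 2R_q`,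
`[E_q, L_q] = -2L_q`. -/
theorem stmt6 {W : Type*} [Ring W] [Algebra ℂ W] (d : ℕ) (a ap : Fin d → W)
    (hccr : ∀ j k, a j * ap k - ap k * a j = if j = k then 1 else 0)
    (haa : ∀ j k, a j * a k = a k * a j)
    (hpp : ∀ j k, ap j * ap k = ap k * ap j)
    (q : ℝ) (hq : q ∈ Set.Icc (0 : ℝ) 1)
    (Rq Lq Eq : Module.End ℂ W)
    (hRq : ∀ w, Rq w =
      ((1 - q : ℝ) : ℂ) ^ 2 • ∑ j, a j * w * ap j +
      ((q : ℂ) * ((1 - q : ℝ) : ℂ)) • ∑ j, (w * ap j * a j + a j * ap j * w) +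
      (q : ℂ) ^ 2 • ∑ j, ap j * w * a j)
    (hLq : ∀ w, Lq w = -∑ j, (a j * (ap j * w - w * ap j) - (ap j * w - w * ap j) * a j))
    (hEq : ∀ w, Eq w =
      -∑ j, (((1 - q : ℝ) : ℂ) • (a j * (ap j * w - w * ap j) - (a j * w - w * a j) * ap j) +
             (q : ℂ) • ((ap j * w - w * ap j) * a j - ap j * (a j * w - w * a j))) +
      (d : ℂ) • w) :
    Rq * Lq - Lq * Rq = -Eq ∧
    Eq * Rq - Rq * Eq = (2 : ℂ) • Rq ∧
    Eq * Lq - Lq * Eq = -((2 : ℂ) • Lq) :=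
  stmt6_general d a ap hccr haa hpp q Rq Lq Eq hRq hLq hEq
end

section
/- For any polynomial p ∈ ℂ[t], the operator R_q applied to p(N) satisfies R_q(p(N)) = q(1-q)(2N + d)·p(N) + (1-q)²(N + d)·p(N+1) + q²·N·p(N-1), where all expressions are elements of the Weyl algebra (polynomials in N). -/
open Polynomial

private lemma aeval_swap' {W : Type*} [Ring W] [Algebra ℂ W] (c x y : W)
    (h : c * x = y * c) (p : Polynomial ℂ) :
    c * Polynomial.aeval x p = Polynomial.aeval y p * c := by
  induction p using Polynomial.induction_on with
  | C r => simp [Algebra.commutes]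
  | add p q hp hq => simp [mul_add, add_mul, hp, hq]
  | monomial n r ih =>
      have hx : Polynomial.aeval x (Polynomial.C r * Polynomial.X ^ (n + 1)) =
          Polynomial.aeval x (Polynomial.C r * Polynomial.X ^ n) * x := by
        simp [pow_succ, mul_assoc]
      have hy : Polynomial.aeval y (Polynomial.C r * Polynomial.X ^ (n + 1)) =
          Polynomial.aeval y (Polynomial.C r * Polynomial.X ^ n) * y := by
        simp [pow_succ, mul_assoc]
      rw [hx, hy, ← mul_assoc, ih, mul_assoc, h, ← mul_assoc]

/-- For any polynomial `p ∈ ℂ[t]`, the operator `R_q` applied to `p(N)`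
satisfies `R_q(p(N)) = q(1-q)(2N + d)·p(N) + (1-q)²(N + d)·p(N+1) + q²·N·p(N-1)`,
where `N = Σ_j a_j⁺ a_j` is the number operator. -/
theorem stmt9 {W : Type*} [Ring W] [Algebra ℂ W] (d : ℕ) (a ap : Fin d → W)
    (hccr : ∀ j k, a j * ap k - ap k * a j = if j = k then 1 else 0)
    (haa : ∀ j k, a j * a k = a k * a j)
    (hpp : ∀ j k, ap j * ap k = ap k * ap j)
    (q : ℝ) (hq : q ∈ Set.Icc (0 : ℝ) 1)
    (N : W) (hN : N = ∑ j, ap j * a j)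
    (Rq : Module.End ℂ W)
    (hRq : ∀ w, Rq w =
      ((1 - q : ℝ) : ℂ) ^ 2 • ∑ j, a j * w * ap j +
      ((q : ℂ) * ((1 - q : ℝ) : ℂ)) • ∑ j, (w * ap j * a j + a j * ap j * w) +
      (q : ℂ) ^ 2 • ∑ j, ap j * w * a j) :
    ∀ p : Polynomial ℂ,
      Rq (Polynomial.aeval N p) =
        ((q : ℂ) * ((1 - q : ℝ) : ℂ)) • ((2 * N + (d : W)) * Polynomial.aeval N p) +
        ((1 - q : ℝ) : ℂ) ^ 2 • ((N + (d : W)) * Polynomial.aeval (N + 1) p) +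
        (q : ℂ) ^ 2 • (N * Polynomial.aeval (N - 1) p) := by
  have hcomm : ∀ j k, a j * ap k = ap k * a j + if j = k then 1 else 0 :=
    fun j k => sub_eq_iff_eq_add'.mp (hccr j k)
  have haN : ∀ j, a j * N = (N + 1) * a j := by
    intro j
    rw [hN, Finset.mul_sum, add_mul, one_mul, Finset.sum_mul]
    have step : ∀ k, a j * (ap k * a k) =
        ap k * a k * a j + (if j = k then 1 else 0) * a k := by
      intro k
      rw [← mul_assoc, hcomm j k, add_mul, mul_assoc, haa, ← mul_assoc]
    rw [Finset.sum_congr rfl fun k _ => step k, Finset.sum_add_distrib]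
    simp
  have hapN : ∀ j, ap j * N = (N - 1) * ap j := by
    intro j
    rw [hN, Finset.mul_sum, sub_mul, one_mul, Finset.sum_mul]
    have step : ∀ k, ap j * (ap k * a k) =
        ap k * a k * ap j - (if k = j then 1 else 0) * ap k := by
      intro k
      have := hcomm k j
      rw [← mul_assoc, hpp j k, mul_assoc, mul_assoc]
      rw [show a k * ap j = ap j * a k + (if k = j then 1 else 0) from this]
      rw [mul_add, ← mul_assoc]
      rcases eq_or_ne k j with h | h <;> simp [h]
    rw [Finset.sum_congr rfl fun k _ => step k, Finset.sum_sub_distrib]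
    simp
  have hsum : (∑ j, a j * ap j) = N + (d : W) := by
    rw [hN]
    have : ∀ j : Fin d, a j * ap j = ap j * a j + 1 := by
      intro j; simpa using hcomm j j
    rw [Finset.sum_congr rfl fun j _ => this j, Finset.sum_add_distrib]
    simp
  intro p
  set P := Polynomial.aeval N p with hP
  set P1 := Polynomial.aeval (N + 1) p with hP1
  set Pm := Polynomial.aeval (N - 1) p with hPm
  have h1 : ∀ j, a j * P = P1 * a j := fun j => aeval_swap' _ _ _ (haN j) p
  have h2 : ∀ j, ap j * P = Pm * ap j := fun j => aeval_swap' _ _ _ (hapN j) p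
  have hNP : N * P = P * N := aeval_swap' N N N rfl p
  have hNP1 : N * P1 = P1 * N := aeval_swap' N (N + 1) (N + 1) (by noncomm_ring) p
  have hNPm : N * Pm = Pm * N := aeval_swap' N (N - 1) (N - 1) (by noncomm_ring) p
  have hd : ∀ w : W, (d : W) * w = w * (d : W) := fun w => (Nat.cast_commute d w).eq
  have e1 : ∑ j, a j * P * ap j = P1 * (N + (d : W)) := by
    rw [← hsum, Finset.mul_sum]
    exact Finset.sum_congr rfl fun j _ => by rw [h1 j, mul_assoc]
  have e2 : ∑ j, (P * ap j * a j + a j * ap j * P) = P * N + (N + (d : W)) * P := by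
    rw [Finset.sum_add_distrib]
    congr 1
    · rw [hN, Finset.mul_sum]
      exact Finset.sum_congr rfl fun j _ => mul_assoc _ _ _
    · rw [← hsum, Finset.sum_mul]
  have e3 : ∑ j, ap j * P * a j = Pm * N := by
    rw [hN, Finset.mul_sum]
    exact Finset.sum_congr rfl fun j _ => by rw [h2 j, mul_assoc]
  rw [hRq, e1, e2, e3]
  have c1 : P1 * (N + (d : W)) = (N + (d : W)) * P1 := by
    rw [mul_add, add_mul, hNP1, hd]
  have c2 : P * N + (N + (d : W)) * P = (2 * N + (d : W)) * P := by
    rw [add_mul, add_mul, two_mul, add_mul, hNP]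
    abel
  rw [c1, c2, ← hNPm]
  abel
end

section
/- For each k ∈ ℤ_{≥0}, the element η_k = R_q^k(I) of the Weyl algebra is a polynomial in the number operator N of exact degree k; that is, there exists a unique polynomial ω_k ∈ ℂ[t] of degree exactly k with η_k = ω_k(N). Consequently, the subspace {p(R_q)(I) : p ∈ ℂ[t]} of the Weyl algebra equals ℂ[N] and is independent of q. -/
/-- The defining relations (CCR) of the Weyl algebra `W_{2d}`: generators `a_j` are
indexed by `Sum.inl j` and `a_j⁺` by `Sum.inr j`. -/
inductive WeylRel (d : ℕ) :
    FreeAlgebra ℂ (Fin d ⊕ Fin d) → FreeAlgebra ℂ (Fin d ⊕ Fin d) → Prop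
  | ccr (j k : Fin d) :
      WeylRel d (FreeAlgebra.ι ℂ (Sum.inl j) * FreeAlgebra.ι ℂ (Sum.inr k))
        (FreeAlgebra.ι ℂ (Sum.inr k) * FreeAlgebra.ι ℂ (Sum.inl j) +
          if j = k then 1 else 0)
  | aa (j k : Fin d) :
      WeylRel d (FreeAlgebra.ι ℂ (Sum.inl j) * FreeAlgebra.ι ℂ (Sum.inl k))
        (FreeAlgebra.ι ℂ (Sum.inl k) * FreeAlgebra.ι ℂ (Sum.inl j))
  | pp (j k : Fin d) :
      WeylRel d (FreeAlgebra.ι ℂ (Sum.inr j) * FreeAlgebra.ι ℂ (Sum.inr k))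
        (FreeAlgebra.ι ℂ (Sum.inr k) * FreeAlgebra.ι ℂ (Sum.inr j))

/-- The Weyl algebra `W_{2d}`. -/
abbrev WeylAlgebra (d : ℕ) := RingQuot (WeylRel d)

/-- The annihilation generators `a_j`. -/
noncomputable def wA (d : ℕ) (j : Fin d) : WeylAlgebra d :=
  RingQuot.mkAlgHom ℂ (WeylRel d) (FreeAlgebra.ι ℂ (Sum.inl j))

/-- The creation generators `a_j⁺`. -/
noncomputable def wAp (d : ℕ) (j : Fin d) : WeylAlgebra d :=
  RingQuot.mkAlgHom ℂ (WeylRel d) (FreeAlgebra.ι ℂ (Sum.inr j))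

/-- The number operator `N = Σ_j a_j⁺ a_j`. -/
noncomputable def numberOp (d : ℕ) : WeylAlgebra d := ∑ j, wAp d j * wA d j

/-!
Commuting `a_j` and `a_j⁺` past `N` shifts its argument, `a_j f(N) = f(N + 1) a_j` and
`a_j⁺ f(N) = f(N - 1) a_j⁺`, and `Σ_j a_j a_j⁺ = N + d`. Hence `R_q (f(N)) = (T f)(N)` for an
explicit operator `T` on `ℂ[t]`, and `η_k = (T^k 1)(N)`. Since `(1 - q)² + 2q(1 - q) + q² = 1`,
`T` raises the degree by one and keeps the leading coefficient, so `T^k 1` is monic of degree `k`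
and these polynomials span `ℂ[t]`. Uniqueness of `ω_k` is injectivity of `f ↦ f(N)`: in the Fock
representation on `ℂ[x_1, …, x_d]`, `N` is the Euler operator, with eigenvector `x_1^n` for the
eigenvalue `n`.
-/

open Polynomial

lemma SemiconjBy.aeval {R A : Type*} [CommSemiring R] [Semiring A] [Algebra R A] {a x y : A}
    (h : SemiconjBy a x y) (f : R[X]) : SemiconjBy a (aeval x f) (aeval y f) := by
  induction f using Polynomial.induction_on' with
  | add f g hf hg => simpa only [map_add] using hf.add_right hg
  | monomial n r =>
    simpa only [aeval_monomial] using
      SemiconjBy.mul_right (Algebra.commute_algebraMap_right r a) (h.pow_right n)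

lemma LinearMap.aeval_comp_eq_comp_aeval {R M N : Type*} [CommSemiring R] [AddCommMonoid M]
    [Module R M] [AddCommMonoid N] [Module R N] {f : Module.End R M} {g : Module.End R N}
    {φ : M →ₗ[R] N} (h : g ∘ₗ φ = φ ∘ₗ f) (p : R[X]) :
    aeval g p ∘ₗ φ = φ ∘ₗ aeval f p := by
  induction p using Polynomial.induction_on with
  | C a => ext; simp [Module.algebraMap_end_apply]
  | add p r hp hr => simp only [map_add, LinearMap.add_comp, LinearMap.comp_add, hp, hr]
  | monomial n a ih =>
    rw [pow_succ, ← mul_assoc, map_mul (aeval g) _ X, map_mul (aeval f) _ X, aeval_X, aeval_X,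
      Module.End.mul_eq_comp, Module.End.mul_eq_comp, LinearMap.comp_assoc, h,
      ← LinearMap.comp_assoc, ih, LinearMap.comp_assoc]

section Degree

variable {R : Type*} [CommRing R] {n : ℕ} {f : R[X]}

lemma coeff_taylor_of_natDegree_le (r : R) (hf : f.natDegree ≤ n) :
    (taylor r f).coeff n = f.coeff n := by
  rcases hf.lt_or_eq with hlt | rfl
  · rw [coeff_eq_zero_of_natDegree_lt hlt,
      coeff_eq_zero_of_natDegree_lt (p := taylor r f) (by rwa [natDegree_taylor])]
  · exact coeff_taylor_natDegree r f

lemma natDegree_mul_X_add_C_le_and_coeff (b : R) (hf : f.natDegree ≤ n) :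
    (f * (X + C b)).natDegree ≤ n + 1 ∧ (f * (X + C b)).coeff (n + 1) = f.coeff n := by
  have hlin : (X + C b).natDegree ≤ 1 :=
    natDegree_add_le_of_degree_le natDegree_X_le ((natDegree_C b).trans_le zero_le_one)
  refine ⟨natDegree_mul_le_of_le hf hlin, ?_⟩
  rw [mul_add, coeff_add, coeff_mul_X, coeff_mul_C,
    coeff_eq_zero_of_natDegree_lt (hf.trans_lt n.lt_succ_self), zero_mul, add_zero]

end Degree

lemma Polynomial.surjective_aeval_apply_one {K : Type*} [Field K] (T : Module.End K K[X])
    (hT : ∀ k : ℕ, ((T ^ k) 1).degree = k) :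
    Function.Surjective fun p : K[X] ↦ aeval T p 1 := by
  let S : Sequence K := ⟨fun k ↦ (T ^ k) 1, hT⟩
  let L : K[X] →ₗ[K] K[X] := LinearMap.applyₗ 1 ∘ₗ (aeval T).toLinearMap
  have hspan : Submodule.span K (Set.range S) = ⊤ :=
    S.span fun i ↦ (leadingCoeff_ne_zero.mpr (S.ne_zero i)).isUnit
  have hrange : Set.range S ⊆ LinearMap.range L := by
    rintro _ ⟨k, rfl⟩
    exact ⟨X ^ k, by simp [L, S]⟩
  exact LinearMap.range_eq_top.mp (top_le_iff.mp (hspan ▸ Submodule.span_le.mpr hrange))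

lemma MvPolynomial.pderiv_pderiv_comm {R σ : Type*} [CommRing R] (i j : σ)
    (p : MvPolynomial σ R) : pderiv i (pderiv j p) = pderiv j (pderiv i p) := by
  classical
  have h : ⁅pderiv i, pderiv j⁆ = (0 : Derivation R (MvPolynomial σ R) (MvPolynomial σ R)) :=
    derivation_ext fun k ↦ by
      rw [Derivation.commutator_apply, pderiv_X, pderiv_X, Pi.single_apply, Pi.single_apply]
      split_ifs <;> simp
  have hp := congr($h p)
  rwa [Derivation.commutator_apply, Derivation.zero_apply, sub_eq_zero] at hp

/-- The operator on `ℂ[t]` that corresponds to `R_q` under `f ↦ f(N)`. -/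
noncomputable def rqPoly (d : ℕ) (q : ℂ) : Module.End ℂ ℂ[X] :=
  (1 - q) ^ 2 • (LinearMap.mulRight ℂ (X + C (d : ℂ)) ∘ₗ taylor 1) +
  (q * (1 - q)) • (LinearMap.mulRight ℂ X + LinearMap.mulLeft ℂ (X + C (d : ℂ))) +
  q ^ 2 • (LinearMap.mulRight ℂ X ∘ₗ taylor (-1))

lemma rqPoly_apply (d : ℕ) (q : ℂ) (f : ℂ[X]) :
    rqPoly d q f = (1 - q) ^ 2 • (taylor 1 f * (X + C (d : ℂ))) +
      (q * (1 - q)) • (f * X + (X + C (d : ℂ)) * f) + q ^ 2 • (taylor (-1) f * X) :=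
  rfl

lemma natDegree_rqPoly_le_and_coeff {d n : ℕ} (q : ℂ) {f : ℂ[X]} (hf : f.natDegree ≤ n) :
    (rqPoly d q f).natDegree ≤ n + 1 ∧ (rqPoly d q f).coeff (n + 1) = f.coeff n := by
  obtain ⟨h₁, c₁⟩ := natDegree_mul_X_add_C_le_and_coeff (d : ℂ)
    ((natDegree_taylor f 1).trans_le hf)
  obtain ⟨h₂, c₂⟩ := natDegree_mul_X_add_C_le_and_coeff (0 : ℂ) hf
  obtain ⟨h₃, c₃⟩ := natDegree_mul_X_add_C_le_and_coeff (d : ℂ) hf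
  obtain ⟨h₄, c₄⟩ := natDegree_mul_X_add_C_le_and_coeff (0 : ℂ)
    ((natDegree_taylor f (-1)).trans_le hf)
  simp only [C_0, add_zero] at h₂ c₂ h₄ c₄
  rw [coeff_taylor_of_natDegree_le _ hf] at c₁ c₄
  rw [mul_comm] at h₃ c₃
  rw [rqPoly_apply]
  refine ⟨?_, ?_⟩
  · refine natDegree_add_le_of_degree_le (natDegree_add_le_of_degree_le ?_ ?_) ?_ <;>
      refine (natDegree_smul_le _ _).trans ?_
    exacts [h₁, natDegree_add_le_of_degree_le h₂ h₃, h₄]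
  · simp only [coeff_add, coeff_smul, c₁, c₂, c₃, c₄, smul_eq_mul]
    ring

lemma natDegree_rqPoly_pow_apply_one_le_and_coeff (d : ℕ) (q : ℂ) (k : ℕ) :
    ((rqPoly d q ^ k) 1).natDegree ≤ k ∧ ((rqPoly d q ^ k) 1).coeff k = 1 := by
  induction k with
  | zero => simp
  | succ k ih =>
    rw [pow_succ', Module.End.mul_apply]
    obtain ⟨hdeg, hcoeff⟩ := natDegree_rqPoly_le_and_coeff q ih.1
    exact ⟨hdeg, hcoeff.trans ih.2⟩

lemma degree_rqPoly_pow_apply_one (d : ℕ) (q : ℂ) (k : ℕ) :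
    ((rqPoly d q ^ k) 1).degree = k := by
  obtain ⟨hdeg, hcoeff⟩ := natDegree_rqPoly_pow_apply_one_le_and_coeff d q k
  exact degree_eq_of_le_of_coeff_ne_zero (degree_le_of_natDegree_le hdeg) (by simp [hcoeff])

section Relations

variable {d : ℕ}

lemma wA_mul_wAp (j k : Fin d) :
    wA d j * wAp d k = wAp d k * wA d j + if j = k then 1 else 0 := by
  have h := RingQuot.mkAlgHom_rel ℂ (WeylRel.ccr j k)
  simp only [map_mul, map_add] at h
  simpa [wA, wAp, apply_ite (RingQuot.mkAlgHom ℂ (WeylRel d))] using h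

lemma wA_commute_wA (j k : Fin d) : Commute (wA d j) (wA d k) := by
  simpa [Commute, SemiconjBy, wA] using RingQuot.mkAlgHom_rel ℂ (WeylRel.aa (d := d) j k)

lemma wAp_commute_wAp (j k : Fin d) : Commute (wAp d j) (wAp d k) := by
  simpa [Commute, SemiconjBy, wAp] using RingQuot.mkAlgHom_rel ℂ (WeylRel.pp (d := d) j k)

lemma wA_mul_wAp_self (j : Fin d) : wA d j * wAp d j = wAp d j * wA d j + 1 := by
  simpa using wA_mul_wAp j j

lemma sum_wA_mul_wAp : ∑ j, wA d j * wAp d j = numberOp d + d := by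
  simp [wA_mul_wAp_self, Finset.sum_add_distrib, numberOp]

lemma semiconjBy_wA_numberOp (j : Fin d) :
    SemiconjBy (wA d j) (numberOp d) (numberOp d + 1) := by
  have key (k : Fin d) : wA d j * (wAp d k * wA d k)
      = (wAp d k * wA d k + if j = k then 1 else 0) * wA d j := by
    rw [← mul_assoc, wA_mul_wAp, add_mul, add_mul, mul_assoc, (wA_commute_wA j k).eq, mul_assoc]
    split_ifs with h <;> simp [h]
  simp [SemiconjBy, numberOp, Finset.mul_sum, key, Finset.sum_add_distrib, Finset.sum_mul,
    add_mul]

lemma semiconjBy_wAp_numberOp (j : Fin d) :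
    SemiconjBy (wAp d j) (numberOp d) (numberOp d - 1) := by
  have key (k : Fin d) : wAp d j * (wAp d k * wA d k)
      = (wAp d k * wA d k - if k = j then 1 else 0) * wAp d j := by
    rw [← mul_assoc, (wAp_commute_wAp j k).eq, mul_assoc,
      eq_sub_of_add_eq (wA_mul_wAp k j).symm]
    split_ifs with h <;> simp [h, sub_mul, mul_sub, mul_assoc]
  simp [SemiconjBy, numberOp, Finset.mul_sum, key, Finset.sum_sub_distrib, Finset.sum_mul,
    sub_mul]

end Relations

section NumberOperator

variable {d : ℕ}

lemma wA_mul_aeval_numberOp (j : Fin d) (f : ℂ[X]) :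
    wA d j * aeval (numberOp d) f = aeval (numberOp d) (taylor 1 f) * wA d j := by
  simpa [taylor_apply, aeval_comp] using ((semiconjBy_wA_numberOp j).aeval f).eq

lemma wAp_mul_aeval_numberOp (j : Fin d) (f : ℂ[X]) :
    wAp d j * aeval (numberOp d) f = aeval (numberOp d) (taylor (-1) f) * wAp d j := by
  simpa [taylor_apply, aeval_comp, ← sub_eq_add_neg] using
    ((semiconjBy_wAp_numberOp j).aeval f).eq

noncomputable def weylRq (d : ℕ) (q : ℂ) : Module.End ℂ (WeylAlgebra d) :=
  (1 - q) ^ 2 • ∑ j, LinearMap.mulLeft ℂ (wA d j) ∘ₗ LinearMap.mulRight ℂ (wAp d j) +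
  (q * (1 - q)) • ∑ j, (LinearMap.mulRight ℂ (wAp d j * wA d j) +
    LinearMap.mulLeft ℂ (wA d j * wAp d j)) +
  q ^ 2 • ∑ j, LinearMap.mulLeft ℂ (wAp d j) ∘ₗ LinearMap.mulRight ℂ (wA d j)

lemma weylRq_apply (q : ℂ) (w : WeylAlgebra d) :
    weylRq d q w = (1 - q) ^ 2 • ∑ j, wA d j * w * wAp d j +
      (q * (1 - q)) • ∑ j, (w * wAp d j * wA d j + wA d j * wAp d j * w) +
      q ^ 2 • ∑ j, wAp d j * w * wA d j := by
  simp [weylRq, LinearMap.sum_apply, mul_assoc]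

lemma weylRq_aeval_numberOp (q : ℂ) (f : ℂ[X]) :
    weylRq d q (aeval (numberOp d) f) = aeval (numberOp d) (rqPoly d q f) := by
  have outer : ∑ j, wA d j * aeval (numberOp d) f * wAp d j
      = aeval (numberOp d) (taylor 1 f) * (numberOp d + d) := by
    simp_rw [wA_mul_aeval_numberOp, mul_assoc, ← Finset.mul_sum, sum_wA_mul_wAp]
  have inner : ∑ j, wAp d j * aeval (numberOp d) f * wA d j
      = aeval (numberOp d) (taylor (-1) f) * numberOp d := by
    simp_rw [wAp_mul_aeval_numberOp, mul_assoc, ← Finset.mul_sum, numberOp]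
  have middle : ∑ j, (aeval (numberOp d) f * wAp d j * wA d j +
      wA d j * wAp d j * aeval (numberOp d) f)
      = aeval (numberOp d) f * numberOp d + (numberOp d + d) * aeval (numberOp d) f := by
    rw [Finset.sum_add_distrib, ← Finset.sum_mul, sum_wA_mul_wAp]
    simp_rw [mul_assoc, ← Finset.mul_sum, numberOp]
  rw [weylRq_apply, outer, inner, middle, rqPoly_apply]
  simp only [map_add, map_smul, map_mul, aeval_X, map_natCast]

lemma weylRq_comp_aeval_numberOp (q : ℂ) :
    weylRq d q ∘ₗ (aeval (numberOp d)).toLinearMap =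
      (aeval (numberOp d)).toLinearMap ∘ₗ rqPoly d q :=
  LinearMap.ext (weylRq_aeval_numberOp q)

lemma aeval_weylRq_apply_one (q : ℂ) (p : ℂ[X]) :
    aeval (weylRq d q) p 1 = aeval (numberOp d) (aeval (rqPoly d q) p 1) := by
  simpa using LinearMap.congr_fun
    (LinearMap.aeval_comp_eq_comp_aeval (weylRq_comp_aeval_numberOp q) p) 1

end NumberOperator

section Fock

variable {d : ℕ}

noncomputable def fockGen (d : ℕ) :
    Fin d ⊕ Fin d → Module.End ℂ (MvPolynomial (Fin d) ℂ) :=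
  Sum.elim (fun j ↦ (MvPolynomial.pderiv j).toLinearMap)
    (fun j ↦ LinearMap.mulLeft ℂ (MvPolynomial.X j))

lemma lift_fockGen_rel ⦃x y : FreeAlgebra ℂ (Fin d ⊕ Fin d)⦄ (h : WeylRel d x y) :
    FreeAlgebra.lift ℂ (fockGen d) x = FreeAlgebra.lift ℂ (fockGen d) y := by
  induction h with
  | ccr j k =>
    refine LinearMap.ext fun p ↦ ?_
    by_cases hjk : j = k
    · subst hjk
      simp [fockGen, add_comm]
    · simp [fockGen, hjk, MvPolynomial.pderiv_X_of_ne (Ne.symm hjk)]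
  | aa j k =>
    refine LinearMap.ext fun p ↦ ?_
    simp [fockGen, MvPolynomial.pderiv_pderiv_comm]
  | pp j k =>
    refine LinearMap.ext fun p ↦ ?_
    simp [fockGen, mul_left_comm]

noncomputable def fock (d : ℕ) :
    WeylAlgebra d →ₐ[ℂ] Module.End ℂ (MvPolynomial (Fin d) ℂ) :=
  RingQuot.liftAlgHom ℂ ⟨FreeAlgebra.lift ℂ (fockGen d), lift_fockGen_rel⟩

lemma fock_wA (j : Fin d) : fock d (wA d j) = (MvPolynomial.pderiv j).toLinearMap := by
  simp [fock, wA, fockGen]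

lemma fock_wAp (j : Fin d) : fock d (wAp d j) = LinearMap.mulLeft ℂ (MvPolynomial.X j) := by
  simp [fock, wAp, fockGen]

lemma fock_numberOp_X_pow (i : Fin d) (n : ℕ) :
    fock d (numberOp d) (MvPolynomial.X i ^ n) = (n : ℂ) • MvPolynomial.X i ^ n := by
  simpa [numberOp, fock_wA, fock_wAp, LinearMap.sum_apply, ← Nat.cast_smul_eq_nsmul ℂ] using
    (MvPolynomial.isHomogeneous_X_pow (R := ℂ) i n).sum_X_mul_pderiv

lemma aeval_numberOp_injective (hd : 0 < d) :
    Function.Injective (aeval (numberOp d) : ℂ[X] → WeylAlgebra d) := by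
  rw [injective_iff_map_eq_zero]
  intro g hg
  have hroot (n : ℕ) : g.IsRoot n := by
    have h := congr(fock d $hg (MvPolynomial.X ⟨0, hd⟩ ^ n))
    rw [← aeval_algHom_apply, Module.End.aeval_apply_of_mem_apply_eq_smul
      (fock_numberOp_X_pow _ n)] at h
    simpa [MvPolynomial.X_ne_zero] using h
  exact eq_zero_of_infinite_isRoot g
    (Set.infinite_of_injective_forall_mem Nat.cast_injective hroot)

end Fock

theorem stmt10_general (d : ℕ) (hd : 1 ≤ d) (q : ℝ)
    (Rq : Module.End ℂ (WeylAlgebra d))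
    (hRq : ∀ w, Rq w =
      ((1 - q : ℝ) : ℂ) ^ 2 • ∑ j, wA d j * w * wAp d j +
      ((q : ℂ) * ((1 - q : ℝ) : ℂ)) • ∑ j, (w * wAp d j * wA d j + wA d j * wAp d j * w) +
      (q : ℂ) ^ 2 • ∑ j, wAp d j * w * wA d j) :
    (∀ k : ℕ, ∃! ω : Polynomial ℂ,
      ω.degree = (k : ℕ) ∧ (Rq ^ k) 1 = Polynomial.aeval (numberOp d) ω) ∧
    {w : WeylAlgebra d | ∃ p : Polynomial ℂ, w = Polynomial.aeval Rq p 1} =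
      {w : WeylAlgebra d | ∃ p : Polynomial ℂ, w = Polynomial.aeval (numberOp d) p} := by
  obtain rfl : Rq = weylRq d q := LinearMap.ext fun w ↦ by
    rw [hRq, weylRq_apply]
    push_cast
    rfl
  have hdeg := degree_rqPoly_pow_apply_one d q
  have hpow (k : ℕ) : (weylRq d q ^ k) 1 = aeval (numberOp d) ((rqPoly d q ^ k) 1) := by
    simpa using aeval_weylRq_apply_one q (X ^ k)
  refine ⟨fun k ↦ ⟨(rqPoly d q ^ k) 1, ⟨hdeg k, hpow k⟩, fun ω hω ↦ ?_⟩, ?_⟩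
  · exact aeval_numberOp_injective hd (hω.2.symm.trans (hpow k))
  · ext w
    simp only [Set.mem_ofPred_eq, aeval_weylRq_apply_one]
    exact ((surjective_aeval_apply_one _ hdeg).exists
      (p := fun g ↦ w = aeval (numberOp d) g)).symm

/-- For every `k ∈ ℤ_{≥0}`, the element `η_k = R_q^k(I)` of the Weyl algebra
is a polynomial in the number operator `N` of exact degree `k`: there is a unique
polynomial `ω_k ∈ ℂ[t]` with `degree ω_k = k` and `η_k = ω_k(N)`.  Consequently the
subspace `{p(R_q)(I) : p ∈ ℂ[t]}` of the Weyl algebra equals `ℂ[N]`, independently of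
`q`. -/
theorem stmt10 (d : ℕ) (hd : 1 ≤ d) (q : ℝ) (hq : q ∈ Set.Ico (0 : ℝ) 1)
    (Rq : Module.End ℂ (WeylAlgebra d))
    (hRq : ∀ w, Rq w =
      ((1 - q : ℝ) : ℂ) ^ 2 • ∑ j, wA d j * w * wAp d j +
      ((q : ℂ) * ((1 - q : ℝ) : ℂ)) • ∑ j, (w * wAp d j * wA d j + wA d j * wAp d j * w) +
      (q : ℂ) ^ 2 • ∑ j, wAp d j * w * wA d j) :
    (∀ k : ℕ, ∃! ω : Polynomial ℂ,
      ω.degree = (k : ℕ) ∧ (Rq ^ k) 1 = Polynomial.aeval (numberOp d) ω) ∧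
    {w : WeylAlgebra d | ∃ p : Polynomial ℂ, w = Polynomial.aeval Rq p 1} =
      {w : WeylAlgebra d | ∃ p : Polynomial ℂ, w = Polynomial.aeval (numberOp d) p} :=
  stmt10_general d hd q Rq hRq
end

section
/- R_q²(I) = (N + t₀I)² + (1-2q)(N + t₀I) + q t₀ I, where t₀ = d(1-q) and N is the number operator; equivalently ω₂(t) = (t+t₀)² + (1-2q)(t+t₀) + q t₀. -/
/-- `R_q²(I) = (N + t₀I)² + (1-2q)(N + t₀I) + q t₀ I`, where `t₀ = d(1-q)`
and `N = Σ_j a_j⁺ a_j` is the number operator; equivalently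
`ω₂(t) = (t+t₀)² + (1-2q)(t+t₀) + q t₀`. -/
theorem stmt12 {W : Type*} [Ring W] [Algebra ℂ W] (d : ℕ) (a ap : Fin d → W)
    (hccr : ∀ j k, a j * ap k - ap k * a j = if j = k then 1 else 0)
    (haa : ∀ j k, a j * a k = a k * a j)
    (hpp : ∀ j k, ap j * ap k = ap k * ap j)
    (q : ℝ) (hq : q ∈ Set.Icc (0 : ℝ) 1)
    (N : W) (hN : N = ∑ j, ap j * a j)
    (t₀ : ℝ) (ht₀ : t₀ = d * (1 - q))
    (Rq : Module.End ℂ W)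
    (hRq : ∀ w, Rq w =
      ((1 - q : ℝ) : ℂ) ^ 2 • ∑ j, a j * w * ap j +
      ((q : ℂ) * ((1 - q : ℝ) : ℂ)) • ∑ j, (w * ap j * a j + a j * ap j * w) +
      (q : ℂ) ^ 2 • ∑ j, ap j * w * a j) :
    Rq (Rq 1) =
      (N + (t₀ : ℂ) • (1 : W)) ^ 2 + ((1 - 2 * q : ℝ) : ℂ) • (N + (t₀ : ℂ) • (1 : W)) +
        ((q * t₀ : ℝ) : ℂ) • (1 : W) := by
  -- commutation in product form
  have hcc : ∀ j k, a j * ap k = ap k * a j + (if j = k then 1 else 0) := by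
    intro j k
    have h := hccr j k
    rw [sub_eq_iff_eq_add] at h
    rw [h, add_comm]
  -- ∑ a_j a_j⁺ = N + d
  have S1 : ∑ j, a j * ap j = N + (d : ℂ) • (1 : W) := by
    have h1 : ∀ j : Fin d, a j * ap j = ap j * a j + 1 := by
      intro j; simpa using hcc j j
    rw [Finset.sum_congr rfl fun j _ => h1 j, Finset.sum_add_distrib, ← hN,
      Finset.sum_const, Finset.card_univ, Fintype.card_fin]
    rw [Nat.cast_smul_eq_nsmul ℂ d (1 : W)]
  -- a_j N = N a_j + a_j
  have haN : ∀ j, a j * N = N * a j + a j := by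
    intro j
    rw [hN, Finset.mul_sum, Finset.sum_mul]
    have h2 : ∀ k : Fin d, a j * (ap k * a k)
        = ap k * a k * a j + (if j = k then a k else 0) := by
      intro k
      rw [← mul_assoc, hcc j k, add_mul, mul_assoc, haa j k, ← mul_assoc]
      congr 1
      split_ifs with h
      · rw [one_mul]
      · rw [zero_mul]
    rw [Finset.sum_congr rfl fun k _ => h2 k, Finset.sum_add_distrib,
      Finset.sum_ite_eq Finset.univ j a]
    simp
  -- the four sums appearing in Rq N
  have SA : ∑ j, a j * N * ap j
      = N * N + (d : ℂ) • N + (N + (d : ℂ) • (1 : W)) := by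
    have h3 : ∀ j : Fin d, a j * N * ap j = N * (a j * ap j) + a j * ap j := by
      intro j; rw [haN j, add_mul, mul_assoc]
    rw [Finset.sum_congr rfl fun j _ => h3 j, Finset.sum_add_distrib,
      ← Finset.mul_sum, S1, mul_add, mul_smul_comm, mul_one]
  have SB : ∑ j, N * ap j * a j = N * N := by
    simp only [mul_assoc]
    rw [← Finset.mul_sum, ← hN]
  have SC : ∑ j, a j * ap j * N = N * N + (d : ℂ) • N := by
    rw [← Finset.sum_mul, S1, add_mul, smul_mul_assoc, one_mul]
  have SD : ∑ j, ap j * N * a j = N * N - N := by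
    have h4 : ∀ j : Fin d, ap j * N * a j = ap j * a j * N - ap j * a j := by
      intro j
      have h5 : N * a j = a j * N - a j := by rw [haN j, add_sub_cancel_right]
      rw [mul_assoc, h5, mul_sub, ← mul_assoc]
    rw [Finset.sum_congr rfl fun j _ => h4 j, Finset.sum_sub_distrib,
      ← Finset.sum_mul, ← hN]
  -- Rq 1 = N + t₀ • 1
  have hR1 : Rq 1 = N + (t₀ : ℂ) • (1 : W) := by
    rw [hRq 1]
    simp only [one_mul, mul_one]
    rw [S1, Finset.sum_add_distrib, ← hN, S1]
    match_scalars <;> (subst ht₀; push_cast; ring)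
  -- Rq N
  have hRN : Rq N = N * N + (((t₀ : ℂ) + 1 - 2 * q)) • N
      + ((t₀ : ℂ) * (1 - q)) • (1 : W) := by
    rw [hRq N, SA, SD, Finset.sum_add_distrib, SB, SC]
    match_scalars <;> (subst ht₀; push_cast; ring)
  -- put it together
  have hsq : (N + (t₀ : ℂ) • (1 : W)) ^ 2
      = N * N + (2 * (t₀ : ℂ)) • N + ((t₀ : ℂ) ^ 2) • (1 : W) := by
    rw [sq]
    simp only [mul_add, add_mul, smul_mul_assoc, mul_smul_comm, mul_one,
      one_mul, smul_smul]
    match_scalars <;> ring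
  rw [hR1, map_add, map_smul, hRN, hR1, hsq]
  match_scalars <;> (subst ht₀; push_cast; ring)
end

section
/- The induced difference operators on ℂ[t] corresponding to R_q, L_q, E_q acting on polynomials of the number operator are, respectively: R̃_q ω(t) = (1-q)²(t+d)Δω(t) - q² t ∇ω(t) + (t + d(1-q))ω(t); L̃_q ω(t) = (t+d)Δω(t) - t∇ω(t); Ẽ_q ω(t) = 2(1-q)(t+d)Δω(t) + 2qt∇ω(t) + dω(t), where Δω(t) = ω(t+1) - ω(t) and ∇ω(t) = ω(t) - ω(t-1). That is, for every ω ∈ ℂ[t], R_q(ω(N)) = (R̃_q ω)(N), L_q(ω(N)) = (L̃_q ω)(N), and E_q(ω(N)) = (Ẽ_q ω)(N). -/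
open Polynomial

/-- The induced difference operators on `ℂ[t]` corresponding to
`R_q, L_q, E_q` acting on polynomials of the number operator are
`R̃_q ω(t) = (1-q)²(t+d)Δω(t) - q² t ∇ω(t) + (t + d(1-q))ω(t)`,
`L̃_q ω(t) = (t+d)Δω(t) - t∇ω(t)`,
`Ẽ_q ω(t) = 2(1-q)(t+d)Δω(t) + 2qt∇ω(t) + dω(t)`,
where `Δω(t) = ω(t+1) - ω(t)` and `∇ω(t) = ω(t) - ω(t-1)`; i.e. for every `ω ∈ ℂ[t]`,
`R_q(ω(N)) = (R̃_q ω)(N)`, `L_q(ω(N)) = (L̃_q ω)(N)` and `E_q(ω(N)) = (Ẽ_q ω)(N)`. -/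
theorem stmt13 {W : Type*} [Ring W] [Algebra ℂ W] (d : ℕ) (a ap : Fin d → W)
    (hccr : ∀ j k, a j * ap k - ap k * a j = if j = k then 1 else 0)
    (haa : ∀ j k, a j * a k = a k * a j)
    (hpp : ∀ j k, ap j * ap k = ap k * ap j)
    (q : ℝ) (hq : q ∈ Set.Icc (0 : ℝ) 1)
    (N : W) (hN : N = ∑ j, ap j * a j)
    (Rq Lq Eq : Module.End ℂ W)
    (hRq : ∀ w, Rq w =
      ((1 - q : ℝ) : ℂ) ^ 2 • ∑ j, a j * w * ap j +
      ((q : ℂ) * ((1 - q : ℝ) : ℂ)) • ∑ j, (w * ap j * a j + a j * ap j * w) +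
      (q : ℂ) ^ 2 • ∑ j, ap j * w * a j)
    (hLq : ∀ w, Lq w = -∑ j, (a j * (ap j * w - w * ap j) - (ap j * w - w * ap j) * a j))
    (hEq : ∀ w, Eq w =
      -∑ j, (((1 - q : ℝ) : ℂ) • (a j * (ap j * w - w * ap j) - (a j * w - w * a j) * ap j) +
             (q : ℂ) • ((ap j * w - w * ap j) * a j - ap j * (a j * w - w * a j))) +
      (d : ℂ) • w)
    (fwd bwd : Polynomial ℂ → Polynomial ℂ)
    (hfwd : ∀ ω, fwd ω = ω.comp (X + 1) - ω)
    (hbwd : ∀ ω, bwd ω = ω - ω.comp (X - 1)) :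
    ∀ ω : Polynomial ℂ,
      Rq (aeval N ω) =
        aeval N (C (((1 - q : ℝ) : ℂ) ^ 2) * ((X + C (d : ℂ)) * fwd ω)
          - C ((q : ℂ) ^ 2) * (X * bwd ω)
          + (X + C ((d : ℂ) * ((1 - q : ℝ) : ℂ))) * ω) ∧
      Lq (aeval N ω) =
        aeval N ((X + C (d : ℂ)) * fwd ω - X * bwd ω) ∧
      Eq (aeval N ω) =
        aeval N (C (2 * ((1 - q : ℝ) : ℂ)) * ((X + C (d : ℂ)) * fwd ω)
          + C (2 * (q : ℂ)) * (X * bwd ω) + C (d : ℂ) * ω) := by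
  intro ω
  have hmul : ∀ j k, a j * ap k = ap k * a j + (if j = k then 1 else 0) := by
    intro j k; exact (eq_add_of_sub_eq (hccr j k)).trans (add_comm _ _)
  have hA : ∀ j, a j * N = (N + 1) * a j := by
    intro j
    rw [hN, Finset.mul_sum, add_mul, Finset.sum_mul, one_mul]
    have h1 : ∀ k ∈ Finset.univ, a j * (ap k * a k)
        = ap k * a k * a j + (if j = k then (a k : W) else 0) := by
      intro k _
      rw [← mul_assoc, hmul j k, add_mul, mul_assoc, haa j k, ← mul_assoc,
        ite_mul, one_mul, zero_mul]
    rw [Finset.sum_congr rfl h1, Finset.sum_add_distrib, Finset.sum_ite_eq]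
    simp
  have hAp : ∀ j, ap j * N = (N - 1) * ap j := by
    intro j
    rw [hN, Finset.mul_sum, sub_mul, Finset.sum_mul, one_mul]
    have h1 : ∀ k ∈ Finset.univ, ap j * (ap k * a k)
        = ap k * a k * ap j - (if k = j then (ap k : W) else 0) := by
      intro k _
      have h2 : ap j * a k = a k * ap j - (if k = j then (1:W) else 0) := by
        rw [hmul k j, add_sub_cancel_right]
      rw [← mul_assoc, hpp j k, mul_assoc, h2, mul_sub, mul_ite, mul_one,
        mul_zero, ← mul_assoc]
    rw [Finset.sum_congr rfl h1, Finset.sum_sub_distrib, Finset.sum_ite_eq']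
    simp
  have hApow : ∀ j n, a j * N ^ n = (N + 1) ^ n * a j := by
    intro j n
    induction n with
    | zero => simp
    | succ n ih =>
      rw [pow_succ, pow_succ, ← mul_assoc, ih, mul_assoc, hA j, ← mul_assoc]
  have hAppow : ∀ j n, ap j * N ^ n = (N - 1) ^ n * ap j := by
    intro j n
    induction n with
    | zero => simp
    | succ n ih =>
      rw [pow_succ, pow_succ, ← mul_assoc, ih, mul_assoc, hAp j, ← mul_assoc]
  have hAa : ∀ j (p : Polynomial ℂ), a j * aeval N p = aeval (N + 1) p * a j := by
    intro j p
    induction p using Polynomial.induction_on' with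
    | add p r hp hr => rw [map_add, map_add, mul_add, add_mul, hp, hr]
    | monomial n c =>
      rw [aeval_monomial, aeval_monomial, ← mul_assoc, ← Algebra.commutes c (a j),
        mul_assoc, hApow j n, mul_assoc, ← mul_assoc]
  have hApa : ∀ j (p : Polynomial ℂ), ap j * aeval N p = aeval (N - 1) p * ap j := by
    intro j p
    induction p using Polynomial.induction_on' with
    | add p r hp hr => rw [map_add, map_add, mul_add, add_mul, hp, hr]
    | monomial n c =>
      rw [aeval_monomial, aeval_monomial, ← mul_assoc, ← Algebra.commutes c (ap j),
        mul_assoc, hAppow j n, mul_assoc, ← mul_assoc]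
  have hPA : aeval N (ω.comp (X + 1)) = aeval (N + 1) ω := by
    rw [aeval_comp]; simp
  have hPB : aeval N (ω.comp (X - 1)) = aeval (N - 1) ω := by
    rw [aeval_comp]; simp
  have r1 : ∀ j, a j * aeval N ω = aeval N (ω.comp (X + 1)) * a j := by
    intro j; rw [hAa, hPA]
  have r3 : ∀ j, ap j * aeval N ω = aeval N (ω.comp (X - 1)) * ap j := by
    intro j; rw [hApa, hPB]
  have hsum1 : ∑ j, a j * ap j = N + aeval N (C (d : ℂ)) := by
    have h1 : ∀ k ∈ Finset.univ, a k * ap k = ap k * a k + 1 := by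
      intro k _; rw [hmul k k, if_pos rfl]
    rw [Finset.sum_congr rfl h1, Finset.sum_add_distrib, ← hN]
    simp [Algebra.algebraMap_eq_smul_one]
  have S1 : ∑ j, a j * (ap j * aeval N ω) = aeval N ((X + C (d : ℂ)) * ω) := by
    simp only [← mul_assoc, ← Finset.sum_mul, hsum1, map_mul, map_add, aeval_X]
  have S2 : ∑ j, a j * (aeval N ω * ap j) = aeval N (ω.comp (X + 1) * (X + C (d : ℂ))) := by
    have h1 : ∀ j ∈ Finset.univ, a j * (aeval N ω * ap j)
        = aeval N (ω.comp (X + 1)) * (a j * ap j) := by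
      intro j _; rw [← mul_assoc, r1 j, mul_assoc]
    rw [Finset.sum_congr rfl h1, ← Finset.mul_sum, hsum1, map_mul, map_add, aeval_X]
  have S3 : ∑ j, ap j * (aeval N ω * a j) = aeval N (ω.comp (X - 1) * X) := by
    have h1 : ∀ j ∈ Finset.univ, ap j * (aeval N ω * a j)
        = aeval N (ω.comp (X - 1)) * (ap j * a j) := by
      intro j _; rw [← mul_assoc, r3 j, mul_assoc]
    rw [Finset.sum_congr rfl h1, ← Finset.mul_sum, ← hN, map_mul, aeval_X]
  have S4 : ∑ j, aeval N ω * (ap j * a j) = aeval N (ω * X) := by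
    rw [← Finset.mul_sum, ← hN, map_mul, aeval_X]
  have S5 : ∑ j, aeval N ω * (a j * ap j) = aeval N (ω * (X + C (d : ℂ))) := by
    rw [← Finset.mul_sum, hsum1, map_mul, map_add, aeval_X]
  have S6 : ∑ j, ap j * (a j * aeval N ω) = aeval N (X * ω) := by
    simp only [← mul_assoc, ← Finset.sum_mul, ← hN, map_mul, aeval_X]
  have hsm : ∀ (c : ℂ) (p : Polynomial ℂ), c • aeval N p = aeval N (C c * p) := by
    intro c p; rw [map_mul, aeval_C, Algebra.smul_def]
  refine ⟨?_, ?_, ?_⟩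
  · rw [hRq, hfwd, hbwd]
    simp only [mul_assoc, Finset.sum_add_distrib, S1, S2, S3, S4]
    rw [← map_add, hsm, hsm, hsm, ← map_add, ← map_add]
    refine congrArg (aeval N) ?_
    simp only [Complex.ofReal_sub, Complex.ofReal_one, map_sub, map_mul, map_pow, map_one]
    ring
  · rw [hLq, hfwd, hbwd]
    simp only [mul_sub, sub_mul, mul_assoc, Finset.sum_sub_distrib, S1, S2, S3, S4]
    simp only [← map_sub, ← map_neg]
    refine congrArg (aeval N) ?_
    ring
  · rw [hEq, hfwd, hbwd]
    simp only [mul_sub, sub_mul, mul_assoc, smul_sub, Finset.sum_sub_distrib,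
      Finset.sum_add_distrib, ← Finset.smul_sum, S1, S2, S3, S4, S5, S6]
    simp only [hsm, ← map_sub, ← map_neg, ← map_add]
    refine congrArg (aeval N) ?_
    simp only [Complex.ofReal_sub, Complex.ofReal_one, map_sub, map_mul, map_pow, map_one,
      map_ofNat]
    ring
end

section
/- The polynomials ω_k ∈ ℂ[t] defined by the recurrence ω_{k+1}(t) = [t + (1-q)d - (2q-1)k]·ω_k(t) + q(1-q)·k(k+d-1)·ω_{k-1}(t) with ω_{-1} = 0, ω_0 = 1, satisfy the difference equation q·t·∇ω_k(t) + (1-q)(t+d)·Δω_k(t) = k·ω_k(t) for all k ≥ 0, where Δω(t) = ω(t+1)-ω(t) and ∇ω(t) = ω(t)-ω(t-1). -/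
open Polynomial

set_option maxHeartbeats 2000000

theorem key (d : ℕ) (a : ℂ) (ω : ℕ → Polynomial ℂ) (h0 : ω 0 = 1)
    (hrec : ∀ k : ℕ, ω (k + 1) =
      (X + C ((1 - a) * (d : ℂ) - (2 * a - 1) * (k : ℂ))) * ω k +
      C (a * (1 - a) * (k : ℂ) * ((k : ℂ) + (d : ℂ) - 1)) * ω (k - 1)) :
    ∀ k : ℕ,
      (C a * (X * (ω k - (ω k).comp (X - 1))) +
        C (1 - a) * ((X + C (d : ℂ)) * ((ω k).comp (X + 1) - ω k)) =
      C (k : ℂ) * ω k) ∧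
      (C a * X * (ω k).comp (X - 1) + C (1 - a) * (X + C (d : ℂ)) * (ω k).comp (X + 1) =
        ω (k + 1) + C (a * (1 - a) * (k : ℂ) * ((k : ℂ) + (d : ℂ) - 1)) * ω (k - 1)) := by
  have main : ∀ k : ℕ,
      ((C a * (X * (ω k - (ω k).comp (X - 1))) +
        C (1 - a) * ((X + C (d : ℂ)) * ((ω k).comp (X + 1) - ω k)) =
      C (k : ℂ) * ω k) ∧
      (C a * X * (ω k).comp (X - 1) + C (1 - a) * (X + C (d : ℂ)) * (ω k).comp (X + 1) =
        ω (k + 1) + C (a * (1 - a) * (k : ℂ) * ((k : ℂ) + (d : ℂ) - 1)) * ω (k - 1))) ∧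
      ((C a * (X * (ω (k+1) - (ω (k+1)).comp (X - 1))) +
        C (1 - a) * ((X + C (d : ℂ)) * ((ω (k+1)).comp (X + 1) - ω (k+1))) =
      C ((k:ℂ)+1) * ω (k+1)) ∧
      (C a * X * (ω (k+1)).comp (X - 1) + C (1 - a) * (X + C (d : ℂ)) * (ω (k+1)).comp (X + 1) =
        ω (k + 2) + C (a * (1 - a) * ((k : ℂ)+1) * (((k : ℂ)+1) + (d : ℂ) - 1)) * ω k)) := by
    intro k
    induction k with
    | zero =>
      constructor
      · constructor
        · simp [h0]
        · simp only [h0, Nat.zero_sub, Nat.cast_zero]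
          rw [hrec 0]
          simp only [h0, Nat.zero_sub, Nat.cast_zero]
          simp only [map_sub, map_mul, map_add, map_one, map_zero, map_ofNat, Polynomial.C_1, Polynomial.C_0, one_comp]
          ring
      · have h1 : ω 1 = X + C ((1 - a) * (d : ℂ)) := by
          have h := hrec 0
          simpa [h0] using h
        have h2 : ω 2 = (X + C ((1 - a) * (d : ℂ) - (2 * a - 1))) *
            (X + C ((1 - a) * (d : ℂ))) + C (a * (1 - a) * (d : ℂ)) := by
          have h := hrec 1
          rw [h1, h0] at h
          convert h using 3 <;> push_cast <;> ring
        constructor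
        · simp only [show (0:ℕ)+1 = 1 from rfl, h1, Nat.cast_zero, Nat.cast_one,
            map_sub, map_mul, map_add, map_one, map_zero, map_ofNat, Polynomial.C_1,
            Polynomial.C_0, one_comp, add_comp, sub_comp, mul_comp, X_comp, C_comp]
          ring
        · simp only [show (0:ℕ)+2 = 2 from rfl, show (0:ℕ)+1 = 1 from rfl, h1, h2,
            Nat.cast_zero, Nat.cast_one, Nat.sub_self,
            map_sub, map_mul, map_add, map_one, map_zero, map_ofNat, Polynomial.C_1,
            Polynomial.C_0, one_comp, add_comp, sub_comp, mul_comp, X_comp, C_comp]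
          rw [h0]
          ring
    | succ n ih =>
      obtain ⟨⟨hP0, hQ0⟩, hP1, hQ1⟩ := ih
      -- normalize indices and casts
      have hr0 := hrec n
      have hr1 := hrec (n+1)
      have hr2 : ω (n+1+2) = (X + C ((1 - a) * (d:ℂ) - (2*a-1) * ((n:ℂ)+2))) * ω (n+2)
          + C (a * (1-a) * ((n:ℂ)+2) * ((n:ℂ)+2+(d:ℂ)-1)) * ω (n+1) := by
        have h := hrec (n+2)
        push_cast at h
        convert h using 2
      simp only [Nat.add_sub_cancel] at hr1 ⊢
      push_cast at hr1 ⊢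
      rw [show ω (n+2) = ω (n+1+1) from rfl] at hQ1
      refine ⟨⟨?_, ?_⟩, ?_, ?_⟩
      · exact hP1
      · exact hQ1
      · -- P (n+2)
        rw [hr1]
        rw [hr1] at hQ1
        simp only [one_comp, add_comp, sub_comp, mul_comp, X_comp, C_comp] at hQ1 ⊢
        simp only [map_sub, map_mul, map_add, map_one, map_zero, map_ofNat, Polynomial.C_1,
          Polynomial.C_0] at hQ1 hP1 hP0 ⊢
        linear_combination
          (X + (1 - C a) * C (d:ℂ) - (2 * C a - 1) * (C (n:ℂ) + 1)) * hP1 + hQ1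
          + (C a * (1 - C a) * (C (n:ℂ) + 1) * (C (n:ℂ) + 1 + C (d:ℂ) - 1)) * hP0
      · -- Q (n+2)
        rw [hr1] at hQ1
        rw [hr2, show ω (n+2) = ω (n+1+1) from rfl, hr1]
        simp only [one_comp, add_comp, sub_comp, mul_comp, X_comp, C_comp] at hQ1 ⊢
        simp only [map_sub, map_mul, map_add, map_one, map_zero, map_ofNat, Polynomial.C_1,
          Polynomial.C_0] at hQ1 hQ0 hP1 hr0 ⊢
        linear_combination
          (X + (1 - C a) * C (d:ℂ) - (2 * C a - 1) * (C (n:ℂ) + 1)) * hQ1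
          + (C a * (1 - C a) * (C (n:ℂ) + 1) * (C (n:ℂ) + 1 + C (d:ℂ) - 1)) * hQ0 + hP1
          - (C a * (1 - C a) * (C (n:ℂ) + 1) * (C (n:ℂ) + 1 + C (d:ℂ) - 1)) * hr0
  intro k
  exact (main k).1


/-- The polynomials `ω_k ∈ ℂ[t]` defined by `ω₋₁ = 0`, `ω₀ = 1` and the
recurrence `ω_{k+1}(t) = [t + (1-q)d - (2q-1)k]·ω_k(t) + q(1-q)·k(k+d-1)·ω_{k-1}(t)`
satisfy the difference equation
`q·t·∇ω_k(t) + (1-q)(t+d)·Δω_k(t) = k·ω_k(t)` for all `k ≥ 0`, where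
`Δω(t) = ω(t+1) - ω(t)` and `∇ω(t) = ω(t) - ω(t-1)`.  (Since the coefficient
`q(1-q)k(k+d-1)` vanishes for `k = 0`, the term with `ω_{k-1}` is harmless there.) -/
theorem stmt14 (d : ℕ) (hd : 0 < d) (q : ℝ) (hq : q ∈ Set.Icc (0 : ℝ) 1)
    (ω : ℕ → Polynomial ℂ) (h0 : ω 0 = 1)
    (hrec : ∀ k : ℕ, ω (k + 1) =
      (X + C (((1 - q : ℝ) : ℂ) * (d : ℂ) - ((2 * q - 1 : ℝ) : ℂ) * (k : ℂ))) * ω k +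
      C ((q : ℂ) * ((1 - q : ℝ) : ℂ) * (k : ℂ) * ((k : ℂ) + (d : ℂ) - 1)) * ω (k - 1)) :
    ∀ k : ℕ,
      C (q : ℂ) * (X * (ω k - (ω k).comp (X - 1))) +
        C ((1 - q : ℝ) : ℂ) * ((X + C (d : ℂ)) * ((ω k).comp (X + 1) - ω k)) =
      (k : ℂ) • ω k := by
  have h := key d (q : ℂ) ω h0 ?_
  · intro k
    have h1 := (h k).1
    rw [Polynomial.smul_eq_C_mul]
    push_cast
    exact h1
  · intro k
    have h2 := hrec k
    push_cast at h2 ⊢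
    exact h2
end

section
/- For q ∈ [0,1) the polynomials ω_k determined by ω_0 = 1, ω_{-1} = 0 and the recurrence ω_{k+1}(t) - q(1-q)k(k+d-1)ω_{k-1}(t) - [t + (1-q)d - (2q-1)k]ω_k(t) = 0 are given explicitly by ω_k(t) = (d)_k (1-q)^k · ₂F₁(-t, -k, d; 1/(1-q)), where (d)_k = d(d+1)⋯(d+k-1) is the Pochhammer symbol and ₂F₁(-t,-k,d;x) = Σ_{s=0}^{k} ((-t)_s (-k)_s / ((d)_s s!)) x^s is the (terminating) Gauss hypergeometric polynomial in t. -/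
/-!
In the basis `(-t)_s` of `ℂ[t]`, multiplication by `t` acts by `t (-t)_s = s (-t)_s - (-t)_{s+1}`.
Hence the three-term recurrence for `ω_k` becomes a recurrence for the coefficients of
`(d)_k (1-q)^k ₂F₁(-t, -k; d; 1/(1-q))` in that basis; after the contiguity relation
`(j+1) (-j)_s = (j+1-s) (-(j+1))_s` this is a rational identity in a few Pochhammer symbols.
A sequence is determined by `ω₀` and the recurrence, so it equals the explicit polynomials.
-/

open Polynomial Finset

theorem eq_of_three_term_recurrence {M : Type*} {f g : ℕ → M} (F : ℕ → M → M → M)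
    (hf : ∀ k, f (k + 1) = F k (f k) (f (k - 1))) (hg : ∀ k, g (k + 1) = F k (g k) (g (k - 1)))
    (h₀ : f 0 = g 0) : f = g := by
  funext k
  induction k using Nat.strong_induction_on with
  | _ k ih =>
    cases k with
    | zero => exact h₀
    | succ k => rw [hf, hg, ih k (by omega), ih (k - 1) (by omega)]

section CommRing

variable {R : Type*} [CommRing R]

theorem ascPochhammer_eval_neg_add_one_succ (y : R) (s : ℕ) :
    (ascPochhammer R (s + 1)).eval (-(y + 1)) = -(y + 1) * (ascPochhammer R s).eval (-y) := by
  rw [ascPochhammer_succ_left, eval_mul, eval_X, eval_comp, eval_add, eval_X, eval_one]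
  ring_nf

theorem add_one_mul_ascPochhammer_eval_neg (y : R) (s : ℕ) :
    (y + 1) * (ascPochhammer R s).eval (-y) =
      (y + 1 - s) * (ascPochhammer R s).eval (-(y + 1)) := by
  have h := ascPochhammer_eval_neg_add_one_succ y s
  rw [ascPochhammer_succ_eval] at h
  linear_combination h

theorem X_mul_ascPochhammer_comp_neg_X (s : ℕ) :
    X * (ascPochhammer R s).comp (-X) =
      C (s : R) * (ascPochhammer R s).comp (-X) - (ascPochhammer R (s + 1)).comp (-X) := by
  rw [ascPochhammer_succ_right, mul_comp, add_comp, X_comp, natCast_comp, ← C_eq_natCast]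
  ring

theorem sum_C_mul_ascPochhammer_comp_neg_X_recurrence {u v w : ℕ → R} {α β : R} {n : ℕ}
    (hu : u n = 0) (hw₀ : w 0 = α * u 0 + β * v 0)
    (hw : ∀ s, w (s + 1) = (s + 1 + α) * u (s + 1) - u s + β * v (s + 1)) :
    ∑ s ∈ range (n + 1), C (w s) * (ascPochhammer R s).comp (-X) =
      (X + C α) * ∑ s ∈ range (n + 1), C (u s) * (ascPochhammer R s).comp (-X) +
        C β * ∑ s ∈ range (n + 1), C (v s) * (ascPochhammer R s).comp (-X) := by
  set P : ℕ → R[X] := fun s => (ascPochhammer R s).comp (-X)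
  have hshift :
      ∑ s ∈ range (n + 1), C (u s) * P (s + 1) = ∑ s ∈ range n, C (u s) * P (s + 1) := by
    rw [sum_range_succ, hu, C_0, zero_mul, add_zero]
  calc ∑ s ∈ range (n + 1), C (w s) * P s
      = ∑ s ∈ range (n + 1), C ((s + α) * u s + β * v s) * P s
          - ∑ s ∈ range n, C (u s) * P (s + 1) := by
        rw [sum_range_succ', sum_range_succ' (fun s => C ((s + α) * u s + β * v s) * P s),
          hw₀, ← sub_add_eq_add_sub, ← sum_sub_distrib]
        congr 1
        · refine sum_congr rfl fun s _ => ?_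
          rw [hw, ← sub_mul, ← C_sub]
          push_cast
          ring_nf
        · rw [Nat.cast_zero, zero_add]
    _ = ∑ s ∈ range (n + 1), ((X + C α) * (C (u s) * P s) + C β * (C (v s) * P s)) := by
        rw [← hshift, ← sum_sub_distrib]
        refine sum_congr rfl fun s _ => ?_
        simp only [P, map_add, map_mul, add_mul]
        rw [mul_left_comm X, X_mul_ascPochhammer_comp_neg_X]
        ring
    _ = _ := by rw [sum_add_distrib, mul_sum, mul_sum]

end CommRing

section Field

variable {K : Type*} [Field K]

noncomputable def hyp2F1Coeff (e x : K) (k s : ℕ) : K :=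
  (ascPochhammer K s).eval (-(k : K)) / ((ascPochhammer K s).eval e * (s.factorial : K)) * x ^ s

/-- `₂F₁(-t, -k; e; x)` as a polynomial in `t`. -/
noncomputable def terminatingHyp2F1 (e x : K) (k : ℕ) : K[X] :=
  ∑ s ∈ range (k + 1), C (hyp2F1Coeff e x k s) * (ascPochhammer K s).comp (-X)

/-- The paper's `ω_k` is `omegaPoly (1 - q) d k`. -/
noncomputable def omegaPoly (c e : K) (k : ℕ) : K[X] :=
  C ((ascPochhammer K k).eval e * c ^ k) * terminatingHyp2F1 e (1 / c) k

noncomputable def omegaCoeff (c e : K) (k s : ℕ) : K :=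
  (ascPochhammer K k).eval e * c ^ k * hyp2F1Coeff e (1 / c) k s

variable (c e : K)

theorem omegaCoeff_of_lt {k s : ℕ} (h : k < s) : omegaCoeff c e k s = 0 := by
  simp [omegaCoeff, hyp2F1Coeff, ascPochhammer_eval_neg_coe_nat_of_lt h]

theorem omegaPoly_eq_sum {k n : ℕ} (h : k < n) :
    omegaPoly c e k = ∑ s ∈ range n, C (omegaCoeff c e k s) * (ascPochhammer K s).comp (-X) := by
  rw [omegaPoly, terminatingHyp2F1, mul_sum]
  refine sum_subset_zero_on_sdiff (range_subset_range.2 h) (fun s hs => ?_)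
    (fun s _ => by simp only [omegaCoeff, C_mul, mul_assoc])
  rw [mem_sdiff, mem_range, mem_range] at hs
  rw [omegaCoeff_of_lt c e (by omega), C_0, zero_mul]

theorem omegaPoly_zero : omegaPoly c e 0 = 1 := by
  simp [omegaPoly, terminatingHyp2F1, hyp2F1Coeff]

theorem omegaCoeff_succ_zero (k : ℕ) :
    omegaCoeff c e (k + 1) 0 = (c * e - (1 - 2 * c) * k) * omegaCoeff c e k 0 +
      (1 - c) * c * k * (k + e - 1) * omegaCoeff c e (k - 1) 0 := by
  cases k with
  | zero => simp [omegaCoeff, hyp2F1Coeff]; ring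
  | succ j =>
    simp only [omegaCoeff, hyp2F1Coeff, ascPochhammer_succ_eval, Nat.add_sub_cancel,
      ascPochhammer_zero, eval_one, Nat.factorial_zero, pow_zero]
    push_cast
    ring

variable [CharZero K]

theorem omegaCoeff_succ_succ (hc : c ≠ 0) (he : ∀ n, (ascPochhammer K n).eval e ≠ 0)
    (k s : ℕ) :
    omegaCoeff c e (k + 1) (s + 1) =
      (s + 1 + (c * e - (1 - 2 * c) * k)) * omegaCoeff c e k (s + 1) - omegaCoeff c e k s +
        (1 - c) * c * k * (k + e - 1) * omegaCoeff c e (k - 1) (s + 1) := by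
  cases k with
  | zero =>
    cases s with
    | zero =>
      have he₁ : e ≠ 0 := by simpa using he 1
      simp [omegaCoeff, hyp2F1Coeff]
      field_simp
    | succ σ =>
      simp [omegaCoeff_of_lt c e (show 0 < σ + 1 by omega),
        omegaCoeff_of_lt c e (show 0 < σ + 1 + 1 by omega),
        omegaCoeff_of_lt c e (show 1 < σ + 1 + 1 by omega)]
  | succ j =>
    have hes : e + s ≠ 0 := by
      have := he (s + 1)
      rw [ascPochhammer_succ_eval] at this
      exact right_ne_zero_of_mul this
    have hfac : (s.factorial : K) ≠ 0 := Nat.cast_ne_zero.2 s.factorial_ne_zero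
    have hj : (j : K) + 1 ≠ 0 := Nat.cast_add_one_ne_zero j
    -- Every Pochhammer symbol at a negative integer is rewritten through `(-(j+1))_s`.
    have hneg : (ascPochhammer K s).eval (-(j : K)) =
        (j + 1 - s) * (ascPochhammer K s).eval (-((j : K) + 1)) / (j + 1) :=
      eq_div_of_mul_eq hj (by rw [mul_comm, add_one_mul_ascPochhammer_eval_neg])
    simp only [omegaCoeff, hyp2F1Coeff, Nat.add_sub_cancel, Nat.cast_add, Nat.cast_one]
    rw [ascPochhammer_eval_neg_add_one_succ, ascPochhammer_succ_eval s (-(j : K)), hneg]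
    simp only [ascPochhammer_succ_eval, Nat.factorial_succ, Nat.cast_mul]
    push_cast
    simp only [div_pow, one_pow, pow_succ]
    field_simp [he s]
    ring

theorem omegaPoly_succ (hc : c ≠ 0) (he : ∀ n, (ascPochhammer K n).eval e ≠ 0) (k : ℕ) :
    omegaPoly c e (k + 1) = (X + C (c * e - (1 - 2 * c) * k)) * omegaPoly c e k +
      C ((1 - c) * c * k * (k + e - 1)) * omegaPoly c e (k - 1) := by
  rw [omegaPoly_eq_sum c e (show k + 1 < k + 2 by omega),
    omegaPoly_eq_sum c e (show k < k + 2 by omega),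
    omegaPoly_eq_sum c e (show k - 1 < k + 2 by omega)]
  exact sum_C_mul_ascPochhammer_comp_neg_X_recurrence (omegaCoeff_of_lt c e (lt_add_one k))
    (omegaCoeff_succ_zero c e k) (omegaCoeff_succ_succ c e hc he k)

end Field

/-- For `q ∈ [0,1)`, the polynomials `ω_k` determined by `ω₀ = 1`,
`ω₋₁ = 0` and the recurrence
`ω_{k+1}(t) - q(1-q)k(k+d-1)ω_{k-1}(t) - [t + (1-q)d - (2q-1)k]ω_k(t) = 0`
are given explicitly by `ω_k(t) = (d)_k (1-q)^k · ₂F₁(-t, -k, d; 1/(1-q))`, where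
`(d)_k` is the Pochhammer (ascending factorial) symbol and
`₂F₁(-t,-k,d;x) = Σ_{s=0}^{k} ((-t)_s (-k)_s / ((d)_s s!)) x^s` is the terminating
Gauss hypergeometric polynomial in `t` (here `(-t)_s` is the polynomial
`(ascPochhammer ℂ s).comp (-X)`). -/
theorem stmt15 (d : ℕ) (hd : 0 < d) (q : ℝ) (hq : q ∈ Set.Ico (0 : ℝ) 1)
    (ω : ℕ → Polynomial ℂ) (h0 : ω 0 = 1)
    (hrec : ∀ k : ℕ, ω (k + 1) =
      (X + C (((1 - q : ℝ) : ℂ) * (d : ℂ) - ((2 * q - 1 : ℝ) : ℂ) * (k : ℂ))) * ω k +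
      C ((q : ℂ) * ((1 - q : ℝ) : ℂ) * (k : ℂ) * ((k : ℂ) + (d : ℂ) - 1)) * ω (k - 1)) :
    ∀ k : ℕ,
      ω k = C ((ascPochhammer ℂ k).eval (d : ℂ) * ((1 - q : ℝ) : ℂ) ^ k) *
        ∑ s ∈ Finset.range (k + 1),
          C ((ascPochhammer ℂ s).eval (-(k : ℂ)) /
              ((ascPochhammer ℂ s).eval (d : ℂ) * (s.factorial : ℂ)) *
            (1 / ((1 - q : ℝ) : ℂ)) ^ s) *
          (ascPochhammer ℂ s).comp (-X) := by
  set c : ℂ := ((1 - q : ℝ) : ℂ)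
  have hc : c ≠ 0 := Complex.ofReal_ne_zero.2 (sub_pos.2 hq.2).ne'
  have he : ∀ n, (ascPochhammer ℂ n).eval (d : ℂ) ≠ 0 := fun n => by
    rw [← ascPochhammer_eval_cast]
    exact_mod_cast (ascPochhammer_pos n d hd).ne'
  have hω : ∀ k : ℕ, ω (k + 1) = (X + C (c * d - (1 - 2 * c) * k)) * ω k +
      C ((1 - c) * c * k * (k + d - 1)) * ω (k - 1) := fun k => by
    rw [hrec]
    congr 4 <;> push_cast [c] <;> ring
  have hωeq : ω = omegaPoly c d :=
    eq_of_three_term_recurrence (fun k p r => (X + C (c * d - (1 - 2 * c) * k)) * p +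
      C ((1 - c) * c * k * (k + d - 1)) * r) hω (omegaPoly_succ c d hc he) (h0.trans (omegaPoly_zero c d).symm)
  exact fun k => congrFun hωeq k
end
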